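/- arXiv:1711.05064 — 6 statements merged into one kernel-verified Lean document; each statement's English description precedes it below -/
import Mathlib

section
/- Let Ω ⊆ ℍ be a symmetric slice domain. Then there exists a sequence (K_n)_{n∈ℕ} of compact subsets of Ω such that: each K_n is axially symmetric; K_n is contained in the interior of K_{n+1}; every compact subset of Ω is contained in K_n for some n (in particular ⋃_n K_n = Ω); and for every n, every connected component of ℍ* ∖ K_n contains a connected component of ℍ* ∖ Ω, where ℍ* denotes the one-point (Alexandrov) compactification of ℍ. -/
open Quaternion Filter Topology

noncomputable section

/-- The 2-sphere `𝕊 = {q ∈ ℍ : q² = -1}` of quaternionic imaginary units. -/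
def QS : Set ℍ[ℝ] := {q | q ^ 2 = -1}

/-- The slice function `g_I(x,y) = f(x + yI)`. -/
def sliceFun (f : ℍ[ℝ] → ℍ[ℝ]) (I : ℍ[ℝ]) (p : ℝ × ℝ) : ℍ[ℝ] :=
  f ((p.1 : ℍ[ℝ]) + p.2 • I)

/-- `f` is slice regular on `Ω`: for each imaginary unit `I`, the slice function
`g_I(x,y) = f(x+yI)` is real differentiable and satisfies `∂g/∂x + I ∂g/∂y = 0`
at every point `(x,y)` with `x + yI ∈ Ω`. -/
def SliceRegularOn (f : ℍ[ℝ] → ℍ[ℝ]) (Ω : Set ℍ[ℝ]) : Prop :=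
  ∀ I ∈ QS, ∀ p : ℝ × ℝ, ((p.1 : ℍ[ℝ]) + p.2 • I) ∈ Ω →
    DifferentiableAt ℝ (sliceFun f I) p ∧
    fderiv ℝ (sliceFun f I) p (1, 0) + I * fderiv ℝ (sliceFun f I) p (0, 1) = 0

/-- The 2-sphere `x + y𝕊 = {x + yJ : J ∈ 𝕊}` (a real point when `y = 0`). -/
def qSphere (x y : ℝ) : Set ℍ[ℝ] := {q | ∃ I ∈ QS, q = (x : ℍ[ℝ]) + y • I}

/-- The symmetric open set `U(x₀+y₀𝕊, R) = {q : |(q-x₀)² + y₀²| < R²}`. -/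
def sphU (x0 y0 R : ℝ) : Set ℍ[ℝ] :=
  {q | ‖(q - (x0 : ℍ[ℝ])) ^ 2 + ((y0 : ℍ[ℝ])) ^ 2‖ < R ^ 2}

/-- `Ω` is axially symmetric. -/
def AxSymm (Ω : Set ℍ[ℝ]) : Prop :=
  ∀ x y : ℝ, ∀ I ∈ QS, ((x : ℍ[ℝ]) + y • I) ∈ Ω → qSphere x y ⊆ Ω

/-- `Ω` is a symmetric slice domain: an axially symmetric, open, connected set that
meets the real axis and whose intersection with each slice `L_I = ℝ + ℝI` is connected. -/
def SymmSliceDomain (Ω : Set ℍ[ℝ]) : Prop :=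
  IsOpen Ω ∧ IsConnected Ω ∧ AxSymm Ω ∧ (∃ r : ℝ, (r : ℍ[ℝ]) ∈ Ω) ∧
    ∀ I ∈ QS, IsConnected {q ∈ Ω | ∃ a b : ℝ, q = (a : ℍ[ℝ]) + b • I}

/-!
Take `K_n = closedBall 0 n \ thickening (1/(n+1)) Ωᶜ`; compactness, `K_n ⊆ int K_{n+1}` and the
exhaustion of `Ω` hold for any open subset of a proper normed space. Axial symmetry of a set
means invariance under every linear isometry of `ℍ` fixing `1`, since reflections act
transitively on `𝕊`; `K_n` is defined metrically from `Ω`, so it inherits the symmetry. A point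
outside `K_n` is either within `1/(n+1)` of some `a ∉ Ω`, and then the ball about `a` of that
radius avoids `K_n`, or it lies outside `closedBall 0 n`, and then its outward ray joins it to
`∞` outside `K_n`.
-/

open Metric Set
open scoped OnePoint

lemma connectedComponentIn_subset_of_isPreconnected {X : Type*} [TopologicalSpace X]
    {s t S : Set X} {x y : X} (hst : s ⊆ t) (hS : IsPreconnected S) (hSt : S ⊆ t)
    (hx : x ∈ S) (hy : y ∈ S) : connectedComponentIn s y ⊆ connectedComponentIn t x :=
  (connectedComponentIn_mono y hst).trans
    (connectedComponentIn_eq (hS.subset_connectedComponentIn hx hSt hy)).symm.subset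

lemma mem_QS_iff {I : ℍ[ℝ]} : I ∈ QS ↔ I.re = 0 ∧ ‖I‖ = 1 := by
  have hnormSq : normSq I = ‖I‖ ^ 2 := by rw [normSq_eq_norm_mul_self, sq]
  constructor
  · intro hI
    have hnorm : ‖I‖ = 1 := by
      refine (pow_eq_one_iff_of_nonneg (norm_nonneg I) two_ne_zero).1 ?_
      rw [← norm_pow, show I ^ 2 = -1 from hI, norm_neg, norm_one]
    refine ⟨sq_eq_neg_normSq.1 ?_, hnorm⟩
    rw [hnormSq, hnorm, show I ^ 2 = -1 from hI, one_pow, coe_one]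
  · rintro ⟨hre, hnorm⟩
    show I ^ 2 = -1
    rw [sq_eq_neg_normSq.2 hre, hnormSq, hnorm, one_pow, coe_one]

lemma exists_mem_QS_eq_re_add_smul (q : ℍ[ℝ]) : ∃ I ∈ QS, q = (q.re : ℍ[ℝ]) + ‖q.im‖ • I := by
  by_cases him : q.im = 0
  · have hi : (⟨0, 1, 0, 0⟩ : ℍ[ℝ]) ^ 2 = -1 := by
      rw [sq]
      ext <;> simp
    obtain ⟨I, hI⟩ : ∃ I : ℍ[ℝ], I ∈ QS := ⟨_, hi⟩
    refine ⟨I, hI, ?_⟩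
    nth_rw 1 [← re_add_im q]
    simp [him]
  · refine ⟨‖q.im‖⁻¹ • q.im, mem_QS_iff.2 ⟨by simp, norm_smul_inv_norm him⟩, ?_⟩
    rw [smul_inv_smul₀ (norm_ne_zero_iff.2 him), re_add_im]

namespace LinearIsometryEquiv

variable {R : ℍ[ℝ] ≃ₗᵢ[ℝ] ℍ[ℝ]}

lemma re_apply_of_map_one (hR : R 1 = 1) (q : ℍ[ℝ]) : (R q).re = q.re := by
  have h := R.inner_map_map q 1
  rwa [hR, inner_def, inner_def, star_one, mul_one, mul_one] at h

lemma map_coe_add_smul_of_map_one (hR : R 1 = 1) (x y : ℝ) (I : ℍ[ℝ]) :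
    R ((x : ℍ[ℝ]) + y • I) = (x : ℍ[ℝ]) + y • R I := by
  rw [map_add, map_smul, ← mul_one (x : ℍ[ℝ]), coe_mul_eq_smul, map_smul, hR]

lemma map_mem_QS_of_map_one (hR : R 1 = 1) {I : ℍ[ℝ]} (hI : I ∈ QS) : R I ∈ QS := by
  rw [mem_QS_iff] at hI ⊢
  rw [re_apply_of_map_one hR, R.norm_map]
  exact hI

end LinearIsometryEquiv

lemma exists_linearIsometryEquiv_map_one_map_eq {I J : ℍ[ℝ]} (hI : I ∈ QS) (hJ : J ∈ QS) :
    ∃ R : ℍ[ℝ] ≃ₗᵢ[ℝ] ℍ[ℝ], R 1 = 1 ∧ R I = J := by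
  rw [mem_QS_iff] at hI hJ
  refine ⟨(ℝ ∙ (I - J))ᗮ.reflection, Submodule.reflection_mem_subspace_eq_self ?_,
    Submodule.reflection_sub (hI.2.trans hJ.2.symm)⟩
  rw [Submodule.mem_orthogonal_singleton_iff_inner_right, inner_def, star_one, mul_one,
    re_sub, hI.1, hJ.1, sub_zero]

lemma axSymm_iff {S : Set ℍ[ℝ]} :
    AxSymm S ↔ ∀ R : ℍ[ℝ] ≃ₗᵢ[ℝ] ℍ[ℝ], R 1 = 1 → ∀ q ∈ S, R q ∈ S := by
  constructor
  · intro hS R hR q hq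
    obtain ⟨I, hI, hqI⟩ := exists_mem_QS_eq_re_add_smul q
    rw [hqI] at hq ⊢
    exact hS _ _ I hI hq ⟨R I, R.map_mem_QS_of_map_one hR hI, R.map_coe_add_smul_of_map_one hR ..⟩
  · rintro hS x y I hI hq _ ⟨J, hJ, rfl⟩
    obtain ⟨R, hR1, hRI⟩ := exists_linearIsometryEquiv_map_one_map_eq hI hJ
    simpa only [R.map_coe_add_smul_of_map_one hR1, hRI] using hS R hR1 _ hq

section Exhaustion

variable {E : Type*} [NormedAddCommGroup E] {Ω C : Set E} {n : ℕ}

def exhaustion (Ω : Set E) (n : ℕ) : Set E :=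
  closedBall 0 n \ thickening ((n : ℝ) + 1)⁻¹ Ωᶜ

lemma exhaustion_subset : exhaustion Ω n ⊆ Ω := fun q hq ↦ by
  by_contra hqΩ
  exact hq.2 (self_subset_thickening (by positivity) _ hqΩ)

lemma isCompact_exhaustion [ProperSpace E] : IsCompact (exhaustion Ω n) :=
  (isCompact_closedBall 0 _).diff isOpen_thickening

lemma exhaustion_subset_interior_succ : exhaustion Ω n ⊆ interior (exhaustion Ω (n + 1)) := by
  have hopen : IsOpen (ball (0 : E) (n + 1) \ cthickening ((n : ℝ) + 2)⁻¹ Ωᶜ) :=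
    isOpen_ball.sdiff isClosed_cthickening
  have hsub : ball (0 : E) (n + 1) \ cthickening ((n : ℝ) + 2)⁻¹ Ωᶜ ⊆ exhaustion Ω (n + 1) := by
    refine sdiff_subset_sdiff (by push_cast; exact ball_subset_closedBall) ?_
    push_cast
    rw [add_assoc, one_add_one_eq_two]
    exact thickening_subset_cthickening _ _
  refine Subset.trans ?_ (interior_maximal hsub hopen)
  refine sdiff_subset_sdiff (fun q hq ↦ ?_) (cthickening_subset_thickening' (by positivity) ?_ _)
  · exact mem_ball_zero_iff.2 ((mem_closedBall_zero_iff.1 hq).trans_lt (lt_add_one _))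
  · gcongr
    norm_num

lemma exists_subset_exhaustion (hΩ : IsOpen Ω) (hC : IsCompact C) (hCΩ : C ⊆ Ω) :
    ∃ n, C ⊆ exhaustion Ω n := by
  obtain ⟨δ, hδ, hCδ⟩ := hC.exists_thickening_subset_open hΩ hCΩ
  obtain ⟨r, hCr⟩ := hC.isBounded.subset_closedBall 0
  obtain ⟨N, hrN⟩ := exists_nat_ge r
  obtain ⟨M, hMδ⟩ := exists_nat_one_div_lt hδ
  refine ⟨max N M, fun q hq ↦ ⟨closedBall_subset_closedBall ?_ (hCr hq), fun hqΩ ↦ ?_⟩⟩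
  · exact hrN.trans (by exact_mod_cast le_max_left N M)
  obtain ⟨a, ha, hqa⟩ := mem_thickening_iff.1 hqΩ
  have hεδ : ((max N M : ℕ) + 1 : ℝ)⁻¹ < δ := by
    refine lt_of_le_of_lt ?_ hMδ
    rw [one_div]
    gcongr
    exact_mod_cast le_max_right N M
  exact ha (hCδ (mem_thickening_iff.2 ⟨q, hq, by rw [dist_comm]; exact hqa.trans hεδ⟩))

lemma iUnion_exhaustion (hΩ : IsOpen Ω) : ⋃ n, exhaustion Ω n = Ω :=
  (iUnion_subset fun _ ↦ exhaustion_subset).antisymm fun _ hq ↦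
    mem_iUnion.2 ((exists_subset_exhaustion hΩ isCompact_singleton
      (singleton_subset_iff.2 hq)).imp fun _ h ↦ h rfl)

lemma LinearIsometryEquiv.map_mem_exhaustion [NormedSpace ℝ E] (R : E ≃ₗᵢ[ℝ] E)
    (hR : MapsTo R Ω Ω) {q : E} (hq : q ∈ exhaustion Ω n) :
    R q ∈ exhaustion Ω n := by
  refine ⟨by simpa only [mem_closedBall_zero_iff, R.norm_map] using hq.1, fun hRq ↦ hq.2 ?_⟩
  obtain ⟨a, ha, hRqa⟩ := mem_thickening_iff.1 hRq
  refine mem_thickening_iff.2 ⟨R.symm a, fun h ↦ ha ?_, ?_⟩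
  · simpa only [R.apply_symm_apply] using hR h
  · rwa [← R.dist_map, R.apply_symm_apply]

lemma axSymm_exhaustion {Ω : Set ℍ[ℝ]} (hΩ : AxSymm Ω) : AxSymm (exhaustion Ω n) := by
  rw [axSymm_iff] at hΩ ⊢
  exact fun R hR _ ↦ R.map_mem_exhaustion (hΩ R hR)

lemma isPreconnected_insert_infty_image_coe_ray [NormedSpace ℝ E] [ProperSpace E] {q : E}
    (hq : q ≠ 0) :
    IsPreconnected (insert ∞ ((fun t : ℝ ↦ ((t • q : E) : OnePoint E)) '' Ici 1)) := by
  have hcont : Continuous fun t : ℝ ↦ ((t • q : E) : OnePoint E) :=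
    OnePoint.continuous_coe.comp (continuous_id.smul continuous_const)
  have hq_infty : Tendsto (fun t : ℝ ↦ t • q) atTop (coclosedCompact E) := by
    rw [coclosedCompact_eq_cocompact, ← cobounded_eq_cocompact,
      ← tendsto_norm_atTop_iff_cobounded]
    simp only [norm_smul]
    exact tendsto_norm_atTop_atTop.atTop_mul_const (norm_pos_iff.2 hq)
  have hmem : (∞ : OnePoint E) ∈ closure ((fun t : ℝ ↦ ((t • q : E) : OnePoint E)) '' Ici 1) :=
    mem_closure_of_tendsto (OnePoint.tendsto_coe_infty.comp hq_infty)
      ((eventually_ge_atTop 1).mono fun t ht ↦ mem_image_of_mem _ ht)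
  exact (isPreconnected_Ici.image _ hcont.continuousOn).subset_closure (subset_insert _ _)
    (insert_subset hmem subset_closure)

lemma exists_isPreconnected_of_notMem_exhaustion [NormedSpace ℝ E] [ProperSpace E]
    {p : OnePoint E} (hp : p ∉ ((↑) : E → OnePoint E) '' exhaustion Ω n) :
    ∃ p' ∉ ((↑) : E → OnePoint E) '' Ω, ∃ S, IsPreconnected S ∧ p ∈ S ∧ p' ∈ S ∧
      S ⊆ (((↑) : E → OnePoint E) '' exhaustion Ω n)ᶜ := by
  induction p using OnePoint.rec with
  | infty =>
    exact ⟨∞, OnePoint.infty_notMem_image_coe, {∞}, isPreconnected_singleton, rfl, rfl,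
      singleton_subset_iff.2 hp⟩
  | coe q =>
    rw [OnePoint.coe_injective.mem_set_image] at hp
    by_cases hqn : ‖q‖ ≤ n
    · obtain ⟨a, ha, hqa⟩ : ∃ a ∈ Ωᶜ, dist q a < ((n : ℝ) + 1)⁻¹ :=
        mem_thickening_iff.1 (not_not.1 fun h ↦ hp ⟨mem_closedBall_zero_iff.2 hqn, h⟩)
      refine ⟨a, fun h ↦ ha (OnePoint.coe_injective.mem_set_image.1 h),
        (↑) '' ball a ((n : ℝ) + 1)⁻¹,
        isPreconnected_ball.image _ OnePoint.continuous_coe.continuousOn,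
        mem_image_of_mem _ hqa, mem_image_of_mem _ (mem_ball_self (by positivity)), ?_⟩
      rintro _ ⟨b, hb, rfl⟩ hbK
      rw [OnePoint.coe_injective.mem_set_image] at hbK
      exact hbK.2 (mem_thickening_iff.2 ⟨a, ha, hb⟩)
    · have hq0 : q ≠ 0 := by
        rintro rfl
        exact hqn (by simp)
      refine ⟨∞, OnePoint.infty_notMem_image_coe, _,
        isPreconnected_insert_infty_image_coe_ray hq0,
        Or.inr ⟨1, self_mem_Ici, congrArg _ (one_smul ℝ q)⟩, mem_insert _ _, ?_⟩
      rintro _ (rfl | ⟨t, ht, rfl⟩) hK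
      · exact OnePoint.infty_notMem_image_coe hK
      · rw [OnePoint.coe_injective.mem_set_image] at hK
        have htq : ‖q‖ ≤ ‖t • q‖ := by
          rw [norm_smul, Real.norm_of_nonneg (zero_le_one.trans ht)]
          exact le_mul_of_one_le_left (norm_nonneg q) ht
        exact hqn (htq.trans (mem_closedBall_zero_iff.1 hK.1))

end Exhaustion

/-- a symmetric slice domain admits an exhaustion by axially symmetric
compact sets `K_n` with `K_n ⊆ int K_{n+1}`, such that every compact subset of `Ω` lies
in some `K_n`, and every connected component of `ℍ* ∖ K_n` contains a connected
component of `ℍ* ∖ Ω` (`ℍ*` being the one-point compactification of `ℍ`). -/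
theorem symmetric_compact_exhaustion (Ω : Set ℍ[ℝ]) (hΩ : SymmSliceDomain Ω) :
    ∃ K : ℕ → Set ℍ[ℝ],
      (∀ n, IsCompact (K n)) ∧
      (∀ n, K n ⊆ Ω) ∧
      (∀ n, AxSymm (K n)) ∧
      (∀ n, K n ⊆ interior (K (n + 1))) ∧
      (∀ C : Set ℍ[ℝ], C ⊆ Ω → IsCompact C → ∃ n, C ⊆ K n) ∧
      (⋃ n, K n) = Ω ∧
      (∀ n, ∀ p : OnePoint ℍ[ℝ], p ∉ OnePoint.some '' K n →
        ∃ p' : OnePoint ℍ[ℝ], p' ∉ OnePoint.some '' Ω ∧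
          connectedComponentIn (OnePoint.some '' Ω)ᶜ p' ⊆
            connectedComponentIn (OnePoint.some '' K n)ᶜ p) := by
  obtain ⟨hopen, -, hAx, -, -⟩ := hΩ
  refine ⟨exhaustion Ω, fun _ ↦ isCompact_exhaustion, fun _ ↦ exhaustion_subset,
    fun _ ↦ axSymm_exhaustion hAx, fun _ ↦ exhaustion_subset_interior_succ,
    fun C hCΩ hC ↦ exists_subset_exhaustion hopen hC hCΩ, iUnion_exhaustion hopen,
    fun n p hp ↦ ?_⟩
  obtain ⟨p', hp', S, hS, hpS, hp'S, hSK⟩ := exists_isPreconnected_of_notMem_exhaustion hp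
  exact ⟨p', hp', connectedComponentIn_subset_of_isPreconnected
    (compl_subset_compl.2 (image_mono exhaustion_subset)) hS hSK hpS hp'S⟩
end
end

section
/- Let U ⊆ ℍ be open and let (f_n)_{n∈ℕ} be a sequence of slice regular functions f_n : U → ℍ converging to a function f : U → ℍ uniformly on every compact subset of U. Then f is slice regular on U. -/
open Quaternion Filter Topology

noncomputable section

/-! Fix `I ∈ 𝕊`. The map `x + iy ↦ x + yI` is an isometric embedding of `ℂ` onto `L_I`, and letting
`z` act by left multiplication by its image makes `ℍ` a complex Banach space. For this complex
structure the condition `∂g/∂x + I ∂g/∂y = 0` on `g_I` is the Cauchy–Riemann equation, so `f` is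
slice regular on an open set `Ω` iff each `z ↦ f(x + yI)` is holomorphic on the open set
`{x + iy : x + yI ∈ Ω}`. Uniform convergence on compact subsets of `U` passes to these functions,
and Weierstrass' theorem for holomorphic functions with values in a Banach space concludes. -/

section CauchyRiemann

variable {E : Type*} [NormedAddCommGroup E] [NormedSpace ℝ E] [NormedSpace ℂ E]
  [IsScalarTower ℝ ℂ E]

theorem differentiableAt_complex_iff_differentiableAt_real_of_isScalarTower {f : ℂ → E}
    {z : ℂ} :
    DifferentiableAt ℂ f z ↔ DifferentiableAt ℝ f z ∧
      fderiv ℝ f z Complex.I = Complex.I • fderiv ℝ f z 1 := by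
  -- The scalar tower forces the real structure to be the restriction of the complex one.
  obtain rfl : ‹NormedSpace ℝ E› = NormedSpace.complexToReal := by
    have hModule : (‹NormedSpace ℝ E›).toModule = NormedSpace.complexToReal.toModule :=
      Module.ext' _ _ fun r x => (algebraMap_smul ℂ r x).symm
    cases ‹NormedSpace ℝ E›
    congr
  exact differentiableAt_complex_iff_differentiableAt_real

end CauchyRiemann

lemma mul_self_eq_neg_one_of_mem_QS {I : ℍ[ℝ]} (hI : I ∈ QS) : I * I = -1 := by
  rw [← sq]
  exact hI

lemma star_eq_neg_of_mem_QS {I : ℍ[ℝ]} (hI : I ∈ QS) : star I = -I := by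
  have hnormSq : normSq I = 1 := by
    have h := congrArg normSq (mul_self_eq_neg_one_of_mem_QS hI)
    rw [map_mul, normSq_neg, map_one] at h
    nlinarith [normSq_nonneg (a := I)]
  rw [star_eq_neg, ← sq_eq_neg_normSq, hnormSq]
  exact hI

lemma add_mul_eq_zero_iff_of_mul_self_eq_neg_one {R : Type*} [Ring R] {I a b : R}
    (hII : I * I = -1) : a + I * b = 0 ↔ b = I * a := by
  constructor
  · intro h
    have hI_mul := congrArg (I * ·) h
    simp only [mul_add, ← mul_assoc, hII, neg_one_mul, mul_zero] at hI_mul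
    exact (add_neg_eq_zero.mp hI_mul).symm
  · rintro rfl
    rw [← mul_assoc, hII, neg_one_mul, add_neg_cancel]

section Slice

variable {I : ℍ[ℝ]} (hI : I ∈ QS)

def sliceEmbedding : ℂ →ₐ[ℝ] ℍ[ℝ] := Complex.liftAux I (mul_self_eq_neg_one_of_mem_QS hI)

lemma sliceEmbedding_apply (z : ℂ) : sliceEmbedding hI z = (z.re : ℍ[ℝ]) + z.im • I := rfl

lemma continuous_sliceEmbedding : Continuous (sliceEmbedding hI) :=
  (sliceEmbedding hI).toLinearMap.continuous_of_finiteDimensional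

lemma star_sliceEmbedding (z : ℂ) :
    star (sliceEmbedding hI z) = sliceEmbedding hI (starRingEnd ℂ z) := by
  simp [sliceEmbedding_apply, star_eq_neg_of_mem_QS hI]

lemma normSq_sliceEmbedding (z : ℂ) : normSq (sliceEmbedding hI z) = Complex.normSq z := by
  have h := congrArg (sliceEmbedding hI) (Complex.mul_conj z)
  rw [map_mul, ← star_sliceEmbedding, self_mul_star, ← Complex.coe_algebraMap, AlgHom.commutes,
    algebraMap_def] at h
  exact coe_injective h

lemma norm_sliceEmbedding (z : ℂ) : ‖sliceEmbedding hI z‖ = ‖z‖ := by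
  rw [← sq_eq_sq₀ (norm_nonneg _) (norm_nonneg _), ← Complex.normSq_eq_norm_sq,
    ← normSq_sliceEmbedding hI, normSq_eq_norm_mul_self, sq]

abbrev sliceNormedSpace : NormedSpace ℂ ℍ[ℝ] where
  toModule := Module.compHom ℍ[ℝ] (sliceEmbedding hI : ℂ →+* ℍ[ℝ])
  norm_smul_le z q := by
    show ‖sliceEmbedding hI z * q‖ ≤ ‖z‖ * ‖q‖
    rw [norm_mul, norm_sliceEmbedding]

lemma sliceNormedSpace_isScalarTower :
    letI := sliceNormedSpace hI
    IsScalarTower ℝ ℂ ℍ[ℝ] :=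
  letI := sliceNormedSpace hI
  ⟨fun r z q => show sliceEmbedding hI (r • z) * q = r • (sliceEmbedding hI z * q) by
    rw [map_smul, smul_mul_assoc]⟩

lemma sliceNormedSpace_I_smul (q : ℍ[ℝ]) :
    letI := sliceNormedSpace hI
    Complex.I • q = I * q :=
  congrArg (· * q) (Complex.liftAux_apply_I _ (mul_self_eq_neg_one_of_mem_QS hI))

lemma sliceFun_eq_comp (f : ℍ[ℝ] → ℍ[ℝ]) :
    sliceFun f I = f ∘ sliceEmbedding hI ∘ Complex.equivRealProdCLM.symm := by
  ext p : 1
  simp [sliceFun, sliceEmbedding_apply, Complex.equivRealProdCLM_symm_apply]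

lemma sliceRegularAt_iff_differentiableAt (f : ℍ[ℝ] → ℍ[ℝ]) (p : ℝ × ℝ) :
    (DifferentiableAt ℝ (sliceFun f I) p ∧
      fderiv ℝ (sliceFun f I) p (1, 0) + I * fderiv ℝ (sliceFun f I) p (0, 1) = 0) ↔
    letI := sliceNormedSpace hI
    DifferentiableAt ℂ (f ∘ sliceEmbedding hI) (Complex.equivRealProdCLM.symm p) := by
  let _ := sliceNormedSpace hI
  have _ := sliceNormedSpace_isScalarTower hI
  rw [differentiableAt_complex_iff_differentiableAt_real_of_isScalarTower, sliceFun_eq_comp hI,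
    ← Function.comp_assoc, ContinuousLinearEquiv.comp_right_differentiableAt_iff,
    ContinuousLinearEquiv.comp_right_fderiv]
  refine and_congr_right fun _ => ?_
  have h10 : Complex.equivRealProdCLM.symm (1, 0) = 1 := by
    simp [Complex.equivRealProdCLM_symm_apply]
  have h01 : Complex.equivRealProdCLM.symm (0, 1) = Complex.I := by
    simp [Complex.equivRealProdCLM_symm_apply]
  simp only [ContinuousLinearMap.comp_apply, ContinuousLinearEquiv.coe_coe, h10, h01,
    add_mul_eq_zero_iff_of_mul_self_eq_neg_one (mul_self_eq_neg_one_of_mem_QS hI),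
    sliceNormedSpace_I_smul hI]

end Slice

theorem sliceRegularOn_iff_differentiableOn {Ω : Set ℍ[ℝ]} (hΩ : IsOpen Ω)
    (f : ℍ[ℝ] → ℍ[ℝ]) :
    SliceRegularOn f Ω ↔ ∀ I (hI : I ∈ QS),
      letI := sliceNormedSpace hI
      DifferentiableOn ℂ (f ∘ sliceEmbedding hI) (sliceEmbedding hI ⁻¹' Ω) := by
  refine forall₂_congr fun I hI => ?_
  let _ := sliceNormedSpace hI
  have hV : IsOpen (sliceEmbedding hI ⁻¹' Ω) := hΩ.preimage (continuous_sliceEmbedding hI)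
  simp only [sliceRegularAt_iff_differentiableAt hI, Complex.equivRealProdCLM.surjective.forall,
    ContinuousLinearEquiv.symm_apply_apply]
  exact ⟨fun h z hz => (h z hz).differentiableWithinAt,
    fun h z hz => (h z hz).differentiableAt (hV.mem_nhds hz)⟩

/-- a limit, uniform on all compact subsets of an open set `U`, of slice
regular functions on `U` is slice regular on `U`. -/
theorem sliceRegular_of_uniform_limit_on_compacts (U : Set ℍ[ℝ]) (hU : IsOpen U)
    (F : ℕ → ℍ[ℝ] → ℍ[ℝ]) (f : ℍ[ℝ] → ℍ[ℝ])
    (hreg : ∀ n, SliceRegularOn (F n) U)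
    (hconv : ∀ K : Set ℍ[ℝ], K ⊆ U → IsCompact K →
      TendstoUniformlyOn F f Filter.atTop K) :
    SliceRegularOn f U := by
  have hloc : TendstoLocallyUniformlyOn F f atTop U :=
    (tendstoLocallyUniformlyOn_iff_forall_isCompact hU).2 hconv
  simp only [sliceRegularOn_iff_differentiableOn hU] at hreg ⊢
  intro I hI
  let _ := sliceNormedSpace hI
  have hφ := continuous_sliceEmbedding hI
  exact (hloc.comp _ (Set.mapsTo_preimage _ _) hφ.continuousOn).differentiableOn
    (.of_forall (hreg · I hI)) (hU.preimage hφ)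
end
end

section
/- The quaternion (q−n)²+1 vanishes exactly when q ∈ n+𝕊, and the family (((q−n)²+1)^{−1})_{n∈ℤ} is summable for every q ∈ ℍ ∖ ⋃_{n∈ℤ}(n+𝕊). The function f(q) = Σ_{n∈ℤ} ((q−n)²+1)^{−1} is slice regular on ℍ ∖ ⋃_{n∈ℤ}(n+𝕊), and for every m ∈ ℤ there exist R > 0 and a slice regular function h : U(m+𝕊, R) → ℍ such that f(q) = ((q−m)²+1)^{−1} + h(q) for all q ∈ U(m+𝕊, R) ∖ (m+𝕊); that is, f has a pole at each sphere n+𝕊, n ∈ ℤ, with principal part ((q−n)²+1)^{−1}, and no other poles. -/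
open Quaternion Filter Topology

noncomputable section

namespace ML

lemma mem_QS_iff {I : ℍ[ℝ]} : I ∈ QS ↔ I.re = 0 ∧ I.imI^2 + I.imJ^2 + I.imK^2 = 1 := by
  constructor
  · intro h
    have h' : I * I = -1 := by rw [← pow_two]; exact h
    rw [Quaternion.ext_iff] at h'
    simp only [Quaternion.re_mul, Quaternion.imI_mul, Quaternion.imJ_mul, Quaternion.imK_mul,
      Quaternion.re_neg, Quaternion.imI_neg, Quaternion.imJ_neg, Quaternion.imK_neg,
      Quaternion.re_one, Quaternion.imI_one, Quaternion.imJ_one, Quaternion.imK_one] at h'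
    obtain ⟨h1, h2, h3, h4⟩ := h'
    have hre : I.re = 0 := by
      nlinarith [sq_nonneg I.re, sq_nonneg I.imI, sq_nonneg I.imJ, sq_nonneg I.imK]
    refine ⟨hre, by nlinarith⟩
  · rintro ⟨h0, h1⟩
    show I ^ 2 = -1
    rw [pow_two, Quaternion.ext_iff]
    simp only [Quaternion.re_mul, Quaternion.imI_mul, Quaternion.imJ_mul, Quaternion.imK_mul,
      Quaternion.re_neg, Quaternion.imI_neg, Quaternion.imJ_neg, Quaternion.imK_neg,
      Quaternion.re_one, Quaternion.imI_one, Quaternion.imJ_one, Quaternion.imK_one, h0]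
    exact ⟨by nlinarith, by ring, by ring, by ring⟩

lemma neg_mem_QS {I : ℍ[ℝ]} (hI : I ∈ QS) : -I ∈ QS := by
  have h : I ^ 2 = -1 := hI
  show (-I) ^ 2 = -1
  rw [neg_sq]
  exact h

/-- The slice embedding `ℂ → ℍ`, `x + y i ↦ x + y I`, as a continuous `ℝ`-linear map. -/
def iotaL (I : ℍ[ℝ]) : ℂ →L[ℝ] ℍ[ℝ] :=
  LinearMap.toContinuousLinearMap
    { toFun := fun z => ((z.re : ℝ) : ℍ[ℝ]) + z.im • I
      map_add' := by
        intro z w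
        simp only [Complex.add_re, Complex.add_im, Quaternion.coe_add, add_smul]; abel
      map_smul' := by
        intro r z
        simp only [Complex.smul_re, Complex.smul_im, RingHom.id_apply, smul_add, smul_smul]
        simp only [smul_eq_mul, Quaternion.coe_mul, ← Quaternion.coe_mul_eq_smul] }

lemma iotaL_apply (I : ℍ[ℝ]) (z : ℂ) : iotaL I z = ((z.re : ℝ) : ℍ[ℝ]) + z.im • I := rfl

lemma iotaL_re (I : ℍ[ℝ]) (z : ℂ) : (iotaL I z).re = z.re + z.im * I.re := by
  simp [iotaL_apply]
lemma iotaL_imI (I : ℍ[ℝ]) (z : ℂ) : (iotaL I z).imI = z.im * I.imI := by simp [iotaL_apply]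
lemma iotaL_imJ (I : ℍ[ℝ]) (z : ℂ) : (iotaL I z).imJ = z.im * I.imJ := by simp [iotaL_apply]
lemma iotaL_imK (I : ℍ[ℝ]) (z : ℂ) : (iotaL I z).imK = z.im * I.imK := by simp [iotaL_apply]

lemma iotaL_mul {I : ℍ[ℝ]} (hI : I ∈ QS) (z w : ℂ) :
    iotaL I (z * w) = iotaL I z * iotaL I w := by
  obtain ⟨h0, h1⟩ := mem_QS_iff.mp hI
  rw [Quaternion.ext_iff]
  simp only [iotaL_re, iotaL_imI, iotaL_imJ, iotaL_imK, Quaternion.re_mul, Quaternion.imI_mul,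
    Quaternion.imJ_mul, Quaternion.imK_mul, Complex.mul_re, Complex.mul_im, h0]
  refine ⟨by linear_combination (z.im*w.im) * h1, by ring, by ring, by ring⟩

lemma iotaL_one (I : ℍ[ℝ]) : iotaL I 1 = 1 := by
  simp [iotaL_apply]

lemma iotaL_I (I : ℍ[ℝ]) : iotaL I Complex.I = I := by simp [iotaL_apply]

lemma iotaL_inv {I : ℍ[ℝ]} (hI : I ∈ QS) (z : ℂ) :
    iotaL I z⁻¹ = (iotaL I z)⁻¹ := by
  rcases eq_or_ne z 0 with rfl | hz
  · simp
  · have : iotaL I z⁻¹ * iotaL I z = 1 := by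
      rw [← iotaL_mul hI, inv_mul_cancel₀ hz, iotaL_one]
    exact (inv_eq_of_mul_eq_one_left this).symm

lemma iotaL_norm {I : ℍ[ℝ]} (hI : I ∈ QS) (z : ℂ) :
    ‖iotaL I z‖ = ‖z‖ := by
  obtain ⟨h0, h1⟩ := mem_QS_iff.mp hI
  have hq : ‖iotaL I z‖ = Real.sqrt (normSq (iotaL I z)) := rfl
  rw [hq, Complex.norm_def, Complex.normSq_apply, Quaternion.normSq_def']
  congr 1
  simp only [iotaL_re, iotaL_imI, iotaL_imJ, iotaL_imK, h0]
  linear_combination (z.im^2) * h1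

lemma iotaL_intCast (I : ℍ[ℝ]) (n : ℤ) : iotaL I (n : ℂ) = (n : ℍ[ℝ]) := by
  simp only [iotaL_apply, Complex.intCast_re, Complex.intCast_im, zero_smul, add_zero]
  push_cast; ring

lemma iotaL_xy (I : ℍ[ℝ]) (x y : ℝ) :
    iotaL I ((x : ℂ) + (y : ℂ) * Complex.I) = (x : ℍ[ℝ]) + y • I := by
  simp [iotaL_apply]

lemma iotaL_poly {I : ℍ[ℝ]} (hI : I ∈ QS) (z : ℂ) (n : ℤ) :
    iotaL I ((z - (n : ℂ)) ^ 2 + 1) = (iotaL I z - (n : ℍ[ℝ])) ^ 2 + 1 := by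
  rw [map_add, iotaL_one, pow_two, iotaL_mul hI, map_sub, iotaL_intCast, ← pow_two]

/-- `ι` intertwines the terms of the series. -/
lemma iotaL_term {I : ℍ[ℝ]} (hI : I ∈ QS) (z : ℂ) (n : ℤ) :
    iotaL I (((z - (n : ℂ)) ^ 2 + 1)⁻¹) = ((iotaL I z - (n : ℍ[ℝ])) ^ 2 + 1)⁻¹ := by
  rw [iotaL_inv hI, iotaL_poly hI]

/-- The inclusion `ℝ × ℝ → ℂ` as a continuous linear map. -/
def eCLM : ℝ × ℝ →L[ℝ] ℂ :=
  LinearMap.toContinuousLinearMap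
    { toFun := fun p => (p.1 : ℂ) + (p.2 : ℂ) * Complex.I
      map_add' := by
        intro p q
        simp only [Prod.fst_add, Prod.snd_add]
        push_cast; ring
      map_smul' := by intro r p; simp [Complex.ofReal_mul]; ring }

lemma eCLM_apply (p : ℝ × ℝ) : eCLM p = (p.1 : ℂ) + (p.2 : ℂ) * Complex.I := rfl

/-! ### Complex-side estimates -/

lemma key_factor (z : ℂ) (n : ℤ) :
    (z - n) ^ 2 + 1 = (z - n - Complex.I) * (z - n + Complex.I) := by
  linear_combination Complex.I_sq

lemma key_lb {z : ℂ} {n : ℤ} (h : 2 * (‖z‖ + 1) ≤ |(n : ℝ)|) (σ : ℂ) (hσ : ‖σ‖ = 1) :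
    |(n : ℝ)| / 2 ≤ ‖z - n - σ‖ := by
  have h1 : ‖(n : ℂ)‖ = |(n : ℝ)| := Complex.norm_intCast n
  have h2 : ‖(n : ℂ)‖ ≤ ‖z‖ + ‖z - n - σ‖ + ‖σ‖ := by
    calc ‖(n : ℂ)‖ = ‖z - (z - n - σ) - σ‖ := by ring_nf
    _ ≤ ‖z - (z - n - σ)‖ + ‖σ‖ := norm_sub_le _ _
    _ ≤ ‖z‖ + ‖z - n - σ‖ + ‖σ‖ := by
        have := norm_sub_le z (z - n - σ); linarith
  rw [h1, hσ] at h2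
  have h0 : 0 ≤ ‖z‖ := norm_nonneg z
  linarith

lemma key_est {z : ℂ} {n : ℤ} (h : 2 * (‖z‖ + 1) ≤ |(n : ℝ)|) :
    (n : ℝ) ^ 2 / 4 ≤ ‖(z - n) ^ 2 + 1‖ := by
  rw [key_factor, norm_mul]
  have h1 := key_lb h Complex.I (by simp)
  have h2 := key_lb h (-Complex.I) (by simp)
  have h2' : |(n : ℝ)| / 2 ≤ ‖z - n + Complex.I‖ := by
    have : z - (n : ℂ) - (-Complex.I) = z - n + Complex.I := by ring
    rwa [this] at h2
  have hn : 0 ≤ |(n : ℝ)| / 2 := by positivity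
  calc (n : ℝ) ^ 2 / 4 = (|(n : ℝ)| / 2) * (|(n : ℝ)| / 2) := by
        rw [← sq_abs]; ring
  _ ≤ ‖z - n - Complex.I‖ * ‖z - n + Complex.I‖ :=
      mul_le_mul h1 h2' hn (le_trans hn h1)

lemma norm_term_le {z : ℂ} {n : ℤ} (h : 2 * (‖z‖ + 1) ≤ |(n : ℝ)|) :
    ‖((z - (n : ℂ)) ^ 2 + 1)⁻¹‖ ≤ 4 * ((n : ℝ) ^ 2)⁻¹ := by
  have hn2 : (2 : ℝ) ≤ |(n : ℝ)| := by
    have : (0:ℝ) ≤ ‖z‖ := norm_nonneg z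
    linarith
  have hpos : (0 : ℝ) < (n : ℝ) ^ 2 / 4 := by nlinarith [sq_abs ((n:ℝ))]
  have hk := key_est h
  rw [norm_inv]
  have := inv_anti₀ hpos hk
  calc ‖(z - (n:ℂ))^2 + 1‖⁻¹ ≤ ((n : ℝ) ^ 2 / 4)⁻¹ := this
  _ = 4 * ((n : ℝ) ^ 2)⁻¹ := by rw [inv_div]; ring

lemma bad_finite (C : ℝ) : {n : ℤ | ¬ 2 * C ≤ |(n : ℝ)|}.Finite := by
  apply Set.Finite.subset (Set.finite_Icc (-⌈2*C⌉) ⌈2*C⌉)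
  intro n hn
  simp only [Set.mem_setOf_eq, not_le] at hn
  have h2 : ((|n| : ℤ) : ℝ) < 2 * C := by push_cast; exact hn
  have h3 : ((|n| : ℤ) : ℝ) ≤ ((⌈2*C⌉ : ℤ) : ℝ) := le_trans h2.le (Int.le_ceil _)
  have h4 : |n| ≤ ⌈2*C⌉ := by exact_mod_cast h3
  simp only [Set.mem_Icc]
  exact abs_le.mp h4

lemma summable_ite (z : ℂ) (P : ℤ → Prop) [DecidablePred P] :
    Summable (fun n : ℤ => if P n then 0 else ((z - (n : ℂ)) ^ 2 + 1)⁻¹) := by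
  apply Summable.of_norm_bounded_eventually (g := fun n : ℤ => 4 * ((n : ℝ) ^ 2)⁻¹)
  · have h := (Real.summable_one_div_int_pow (p := 2)).mpr one_lt_two
    exact (h.mul_left 4).congr (fun n => by rw [one_div])
  · rw [Filter.eventually_cofinite]
    apply Set.Finite.subset (bad_finite (‖z‖ + 1))
    intro n hn
    simp only [Set.mem_setOf_eq, not_le] at hn ⊢
    by_contra hc
    push_neg at hc
    have hb : ‖(if P n then 0 else ((z - (n:ℂ))^2 + 1)⁻¹ : ℂ)‖ ≤ 4 * ((n:ℝ)^2)⁻¹ := by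
      by_cases hP : P n
      · simp only [if_pos hP, norm_zero]; positivity
      · simp only [if_neg hP]; exact norm_term_le hc
    exact absurd hb (not_le.mpr hn)

lemma summable_term (z : ℂ) :
    Summable (fun n : ℤ => ((z - (n : ℂ)) ^ 2 + 1)⁻¹) := by
  have := summable_ite z (fun _ => False)
  simpa using this

/-- Differentiability of the (partially omitted) series at a point where all
non-omitted denominators are nonzero. -/
lemma diffAt_tsum (P : ℤ → Prop) [DecidablePred P] (z₀ : ℂ)
    (hz : ∀ n : ℤ, ¬ P n → (z₀ - (n : ℂ)) ^ 2 + 1 ≠ 0) :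
    DifferentiableAt ℂ (fun w => ∑' n : ℤ, if P n then 0 else ((w - (n : ℂ)) ^ 2 + 1)⁻¹) z₀ := by
  classical
  set g : ℤ → ℂ → ℂ := fun n w => if P n then 0 else ((w - (n : ℂ)) ^ 2 + 1)⁻¹ with hg
  set N : ℕ := ⌈2 * (‖z₀‖ + 2)⌉₊ with hN
  set s : Finset ℤ := Finset.Icc (-(N : ℤ)) N with hs
  have hNs : ∀ n : ℤ, n ∉ s → 2 * (‖z₀‖ + 2) ≤ |(n : ℝ)| := by
    intro n hn
    simp only [hs, Finset.mem_Icc, not_and_or, not_le] at hn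
    have h1 : (N : ℝ) < |(n : ℝ)| := by
      rcases hn with hn | hn
      · have : (n : ℝ) < -(N : ℝ) := by exact_mod_cast hn
        rw [abs_of_neg (by nlinarith [Nat.cast_nonneg (α := ℝ) N])]; linarith
      · have : (N : ℝ) < (n : ℝ) := by exact_mod_cast hn
        rw [abs_of_pos (by nlinarith [Nat.cast_nonneg (α := ℝ) N])]; linarith
    exact le_trans (Nat.le_ceil _) h1.le
  -- the tail, over the complement of `s`
  have htail : DifferentiableOn ℂ
      (fun w => ∑' n : ↑((s : Set ℤ)ᶜ), g (↑n) w) (Metric.ball z₀ 1) := by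
    apply Complex.differentiableOn_tsum_of_summable_norm
      (u := fun n : ↑((s : Set ℤ)ᶜ) => 4 * (((n : ℤ) : ℝ) ^ 2)⁻¹)
    · have h := (Real.summable_one_div_int_pow (p := 2)).mpr one_lt_two
      have h4 : Summable (fun n : ℤ => 4 * ((n : ℝ) ^ 2)⁻¹) :=
        (h.mul_left 4).congr (fun n => by rw [one_div])
      exact h4.subtype _
    · rintro ⟨n, hn⟩
      have hn' : n ∉ s := by simpa using hn
      by_cases hP : P n
      · simp only [hg, if_pos hP]; exact differentiableOn_const 0
      · simp only [hg, if_neg hP]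
        intro w hw
        apply DifferentiableWithinAt.inv
        · exact (((differentiable_id.sub_const _).pow 2).add_const 1).differentiableAt.differentiableWithinAt
        · have hb : 2 * (‖w‖ + 1) ≤ |(n : ℝ)| := by
            have h1 : ‖w‖ ≤ ‖z₀‖ + 1 := by
              have := mem_ball_iff_norm.mp hw
              have := norm_sub_norm_le w z₀
              linarith
            have := hNs n hn'
            linarith
          intro h0
          have := key_est hb
          rw [h0, norm_zero] at this
          have hn2 : (2 : ℝ) ≤ |(n : ℝ)| := by
            have : (0:ℝ) ≤ ‖w‖ := norm_nonneg w
            linarith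
          have h4 : (4:ℝ) ≤ (n:ℝ)^2 := by nlinarith [sq_abs ((n:ℝ))]
          linarith
    · exact Metric.isOpen_ball
    · rintro ⟨n, hn⟩ w hw
      have hn' : n ∉ s := by simpa using hn
      have hb : 2 * (‖w‖ + 1) ≤ |(n : ℝ)| := by
        have h1 : ‖w‖ ≤ ‖z₀‖ + 1 := by
          have := mem_ball_iff_norm.mp hw
          have := norm_sub_norm_le w z₀
          linarith
        have := hNs n hn'
        linarith
      by_cases hP : P n
      · simp only [hg, if_pos hP, norm_zero]; positivity
      · simp only [hg, if_neg hP]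
        exact norm_term_le hb
  -- decompose the sum
  have hdecomp : (fun w => ∑' n : ℤ, g n w)
      = fun w => (∑ n ∈ s, g n w) + ∑' n : ↑((s : Set ℤ)ᶜ), g (↑n) w := by
    funext w
    exact (Summable.sum_add_tsum_compl (s := s) (summable_ite w P)).symm
  rw [show (fun w => ∑' n : ℤ, if P n then 0 else ((w - (n : ℂ)) ^ 2 + 1)⁻¹)
      = (fun w => ∑' n : ℤ, g n w) from rfl, hdecomp]
  apply DifferentiableAt.add
  · apply DifferentiableAt.fun_sum
    intro n _
    by_cases hP : P n
    · simp only [hg, if_pos hP]; exact differentiableAt_const 0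
    · simp only [hg, if_neg hP]
      exact (((differentiable_id.sub_const _).pow 2).add_const 1).differentiableAt.inv (hz n hP)
  · exact (htail z₀ (Metric.mem_ball_self one_pos)).differentiableAt
      (Metric.isOpen_ball.mem_nhds (Metric.mem_ball_self one_pos))

/-! ### Slice values of the sum -/

lemma hval_tsum {I : ℍ[ℝ]} (hI : I ∈ QS) (P : ℤ → Prop) [DecidablePred P] (x y : ℝ) :
    (∑' n : ℤ, if P n then 0 else ((((x : ℍ[ℝ]) + y • I) - (n : ℍ[ℝ])) ^ 2 + 1)⁻¹)
      = iotaL I (∑' n : ℤ, if P n then 0 else ((((x:ℂ) + (y:ℂ)*Complex.I) - (n : ℂ)) ^ 2 + 1)⁻¹) := by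
  rw [(iotaL I).map_tsum (summable_ite _ P)]
  congr 1
  funext n
  rw [apply_ite (iotaL I), map_zero, iotaL_term hI, iotaL_xy]

/-- Transfer of holomorphy of the complex sum to slice regularity. -/
lemma transfer (Fc : ℂ → ℂ) (Ω : Set ℍ[ℝ]) (f : ℍ[ℝ] → ℍ[ℝ])
    (hd : ∀ I ∈ QS, ∀ x y : ℝ, ((x : ℍ[ℝ]) + y • I) ∈ Ω →
      DifferentiableAt ℂ Fc ((x : ℂ) + (y : ℂ) * Complex.I))
    (hval : ∀ I ∈ QS, ∀ x y : ℝ,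
      f ((x : ℍ[ℝ]) + y • I) = iotaL I (Fc ((x : ℂ) + (y : ℂ) * Complex.I))) :
    SliceRegularOn f Ω := by
  intro I hI p hp
  set z : ℂ := (p.1 : ℂ) + (p.2 : ℂ) * Complex.I with hzdef
  have hz : DifferentiableAt ℂ Fc z := hd I hI p.1 p.2 hp
  have heq : sliceFun f I = fun q : ℝ × ℝ => iotaL I (Fc (eCLM q)) := by
    funext q
    rw [sliceFun, hval I hI q.1 q.2, eCLM_apply]
  have hFc : HasFDerivAt Fc ((fderiv ℂ Fc z).restrictScalars ℝ) z :=
    (hz.hasFDerivAt).restrictScalars ℝ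
  have hchain : HasFDerivAt (fun q : ℝ × ℝ => iotaL I (Fc (eCLM q)))
      (((iotaL I).comp ((fderiv ℂ Fc z).restrictScalars ℝ)).comp eCLM) p := by
    have h1 : HasFDerivAt (fun w => iotaL I (Fc w))
        ((iotaL I).comp ((fderiv ℂ Fc z).restrictScalars ℝ)) z :=
      (iotaL I).hasFDerivAt.comp z hFc
    have h2 : HasFDerivAt eCLM eCLM p := eCLM.hasFDerivAt
    exact HasFDerivAt.comp (g := fun w => iotaL I (Fc w)) p h1 h2
  rw [heq]
  refine ⟨hchain.differentiableAt, ?_⟩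
  rw [hchain.fderiv]
  have he1 : eCLM ((1:ℝ), (0:ℝ)) = 1 := by
    simp [eCLM_apply]
  have he2 : eCLM ((0:ℝ), (1:ℝ)) = Complex.I := by
    simp [eCLM_apply]
  set c : ℂ := fderiv ℂ Fc z 1 with hc
  have hm : ∀ v : ℂ, fderiv ℂ Fc z v = v * c := by
    intro v
    have h := (fderiv ℂ Fc z).map_smul v (1 : ℂ)
    simp only [smul_eq_mul, mul_one] at h
    exact h
  simp only [ContinuousLinearMap.comp_apply, ContinuousLinearMap.coe_restrictScalars', he1, he2]
  rw [hm 1, hm Complex.I, one_mul]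
  have e1 : (iotaL I) (c + Complex.I * (Complex.I * c))
      = (iotaL I) c + I * (iotaL I) (Complex.I * c) := by
    rw [map_add, iotaL_mul hI Complex.I (Complex.I * c), iotaL_I]
  rw [← e1]
  have e2 : c + Complex.I * (Complex.I * c) = 0 := by
    linear_combination c * Complex.I_sq
  rw [e2, map_zero]

end ML

namespace ML

lemma cast_int (n : ℤ) : (((n:ℤ) : ℝ) : ℍ[ℝ]) = (n : ℍ[ℝ]) := by push_cast; ring

lemma part1 (q : ℍ[ℝ]) (n : ℤ) :
    (q - (n : ℍ[ℝ])) ^ 2 + 1 = 0 ↔ q ∈ qSphere (n : ℝ) 1 := by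
  constructor
  · intro h
    refine ⟨q - n, ?_, ?_⟩
    · show (q - n) ^ 2 = -1
      exact eq_neg_of_add_eq_zero_left h
    · rw [cast_int, one_smul]
      abel
  · rintro ⟨I, hI, rfl⟩
    have hI2 : I ^ 2 = -1 := hI
    rw [cast_int, one_smul, add_sub_cancel_left, hI2]
    abel

lemma exists_rep (q : ℍ[ℝ]) : ∃ I ∈ QS, ∃ x y : ℝ, q = (x : ℍ[ℝ]) + y • I := by
  set r : ℝ := Real.sqrt (q.imI^2 + q.imJ^2 + q.imK^2) with hr
  have hsum : (0:ℝ) ≤ q.imI^2 + q.imJ^2 + q.imK^2 := by positivity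
  have hr2 : r ^ 2 = q.imI^2 + q.imJ^2 + q.imK^2 := Real.sq_sqrt hsum
  by_cases h0 : r = 0
  · have hz : q.imI^2 + q.imJ^2 + q.imK^2 = 0 := by rw [← hr2, h0]; ring
    have h1 : q.imI = 0 := by nlinarith [sq_nonneg q.imI, sq_nonneg q.imJ, sq_nonneg q.imK]
    have h2 : q.imJ = 0 := by nlinarith [sq_nonneg q.imI, sq_nonneg q.imJ, sq_nonneg q.imK]
    have h3 : q.imK = 0 := by nlinarith [sq_nonneg q.imI, sq_nonneg q.imJ, sq_nonneg q.imK]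
    refine ⟨(show ℍ[ℝ] from ⟨0,1,0,0⟩), ?_, q.re, 0, ?_⟩
    · rw [mem_QS_iff]; norm_num
    · rw [Quaternion.ext_iff]
      simp [h1, h2, h3]
      exact ⟨mul_zero 0, (zero_mul 1).symm, (mul_zero 0).symm, (mul_zero 0).symm⟩
  · refine ⟨(show ℍ[ℝ] from ⟨0, q.imI / r, q.imJ / r, q.imK / r⟩), ?_, q.re, r, ?_⟩
    · rw [mem_QS_iff]
      constructor
      · rfl
      · show (q.imI/r)^2 + (q.imJ/r)^2 + (q.imK/r)^2 = 1
        field_simp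
        linarith [hr2]
    · rw [Quaternion.ext_iff]
      refine ⟨by simp; exact mul_zero r, ?_, ?_, ?_⟩ <;> simp <;> (show _ = r * _; field_simp)

lemma summable_H (q : ℍ[ℝ]) : Summable (fun n : ℤ => ((q - (n : ℍ[ℝ])) ^ 2 + 1)⁻¹) := by
  obtain ⟨I, hI, x, y, rfl⟩ := exists_rep q
  have hfe : (fun n : ℤ => ((((x:ℍ[ℝ]) + y • I) - (n : ℍ[ℝ])) ^ 2 + 1)⁻¹)
      = fun n : ℤ => iotaL I (((((x:ℂ) + (y:ℂ) * Complex.I)) - (n:ℂ)) ^ 2 + 1)⁻¹ := by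
    funext n
    rw [iotaL_term hI, iotaL_xy]
  rw [hfe]
  exact (summable_term _).map (iotaL I) (iotaL I).continuous

/-- membership of a slice point in a sphere when the complex coordinate is a pole -/
lemma pole_to_sphere {I : ℍ[ℝ]} (hI : I ∈ QS) {x y : ℝ} {n : ℤ}
    (h : (((x:ℂ) + (y:ℂ) * Complex.I) - (n:ℂ)) ^ 2 + 1 = 0) :
    ((x : ℍ[ℝ]) + y • I) ∈ qSphere (n : ℝ) 1 := by
  set z : ℂ := (x:ℂ) + (y:ℂ) * Complex.I with hz
  have hfac := key_factor z n
  rw [h] at hfac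
  rcases mul_eq_zero.mp hfac.symm with h1 | h1
  · have hzz : z = (n:ℂ) + Complex.I := by linear_combination h1
    have hx : x = (n:ℝ) := by
      have := congrArg Complex.re hzz
      simpa [hz] using this
    have hy : y = 1 := by
      have := congrArg Complex.im hzz
      simpa [hz] using this
    exact ⟨I, hI, by rw [hx, hy, one_smul]⟩
  · have hzz : z = (n:ℂ) - Complex.I := by linear_combination h1
    have hx : x = (n:ℝ) := by
      have := congrArg Complex.re hzz
      simpa [hz] using this
    have hy : y = -1 := by
      have := congrArg Complex.im hzz
      simpa [hz] using this
    refine ⟨-I, neg_mem_QS hI, ?_⟩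
    rw [hx, hy, one_smul]
    simp

lemma part3 : SliceRegularOn (fun q => ∑' n : ℤ, ((q - (n : ℍ[ℝ])) ^ 2 + 1)⁻¹)
    (⋃ n : ℤ, qSphere (n : ℝ) 1)ᶜ := by
  apply transfer (fun w => ∑' n : ℤ, ((w - (n:ℂ)) ^ 2 + 1)⁻¹)
  · intro I hI x y hmem
    have hz : ∀ n : ℤ, (((x:ℂ) + (y:ℂ) * Complex.I) - (n:ℂ)) ^ 2 + 1 ≠ 0 := by
      intro n h0
      exact hmem (Set.mem_iUnion.mpr ⟨n, pole_to_sphere hI h0⟩)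
    have hd := diffAt_tsum (fun _ => False) ((x:ℂ) + (y:ℂ) * Complex.I) (fun n _ => hz n)
    simpa using hd
  · intro I hI x y
    have hv := hval_tsum hI (fun _ => False) x y
    simpa using hv

lemma sphU_mem_norm {I : ℍ[ℝ]} (hI : I ∈ QS) {x y : ℝ} {m : ℤ} {R : ℝ}
    (h : ((x : ℍ[ℝ]) + y • I) ∈ sphU (m : ℝ) 1 R) :
    ‖(((x:ℂ) + (y:ℂ) * Complex.I) - (m:ℂ)) ^ 2 + 1‖ < R ^ 2 := by
  have hq : ((x : ℍ[ℝ]) + y • I) = iotaL I ((x:ℂ) + (y:ℂ) * Complex.I) := (iotaL_xy I x y).symm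
  have key : iotaL I ((((x:ℂ) + (y:ℂ) * Complex.I) - (m:ℂ)) ^ 2 + 1)
      = (((x : ℍ[ℝ]) + y • I) - ((m:ℝ) : ℍ[ℝ])) ^ 2 + ((1:ℝ) : ℍ[ℝ]) ^ 2 := by
    rw [iotaL_poly hI, ← hq, cast_int]
    norm_num
  have h' : ‖iotaL I ((((x:ℂ) + (y:ℂ) * Complex.I) - (m:ℂ)) ^ 2 + 1)‖ < R ^ 2 := by
    rw [key]; exact h
  rwa [iotaL_norm hI] at h'

lemma no_nearby_pole {m : ℤ} {z : ℂ} (hz : ‖(z - (m:ℂ)) ^ 2 + 1‖ < (1/2 : ℝ) ^ 2) :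
    ∀ n : ℤ, ¬ n = m → (z - (n:ℂ)) ^ 2 + 1 ≠ 0 := by
  intro n hnm h0
  have hfac := key_factor z n
  rw [h0] at hfac
  set k : ℤ := n - m with hk
  have hkne : k ≠ 0 := sub_ne_zero.mpr hnm
  have hk1 : (1:ℤ) ≤ k ^ 2 := by nlinarith [Int.one_le_abs hkne, sq_abs k]
  have hwre : ∃ w : ℂ, (z - (m:ℂ)) ^ 2 + 1 = w ∧ w.re = ((k^2 : ℤ) : ℝ) := by
    rcases mul_eq_zero.mp hfac.symm with h1 | h1
    · have hzz : z = (n:ℂ) + Complex.I := by linear_combination h1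
      refine ⟨((((k^2 : ℤ) : ℝ)) : ℂ) + ((((2*k : ℤ) : ℝ)) : ℂ) * Complex.I, ?_, by
        simp only [Complex.add_re, Complex.ofReal_re, Complex.mul_re, Complex.ofReal_im,
          Complex.I_re, Complex.I_im]
        ring⟩
      rw [hzz]
      push_cast [hk]
      linear_combination Complex.I_sq
    · have hzz : z = (n:ℂ) - Complex.I := by linear_combination h1
      refine ⟨((((k^2 : ℤ) : ℝ)) : ℂ) - ((((2*k : ℤ) : ℝ)) : ℂ) * Complex.I, ?_, by
        simp only [Complex.sub_re, Complex.ofReal_re, Complex.mul_re, Complex.ofReal_im,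
          Complex.I_re, Complex.I_im]
        ring⟩
      rw [hzz]
      push_cast [hk]
      linear_combination Complex.I_sq
  obtain ⟨w, hw1, hw2⟩ := hwre
  rw [hw1] at hz
  have h1 : |w.re| ≤ ‖w‖ := Complex.abs_re_le_norm w
  have h2 : (1:ℝ) ≤ |w.re| := by
    rw [hw2]
    rw [abs_of_nonneg (by positivity)]
    exact_mod_cast hk1
  have hz' : ‖w‖ < 1 := lt_of_lt_of_le hz (by norm_num)
  linarith

lemma part4a (m : ℤ) :
    SliceRegularOn (fun q => ∑' n : ℤ, if n = m then 0 else ((q - (n : ℍ[ℝ])) ^ 2 + 1)⁻¹)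
      (sphU (m : ℝ) 1 (1/2)) := by
  apply transfer (fun w => ∑' n : ℤ, if n = m then 0 else ((w - (n:ℂ)) ^ 2 + 1)⁻¹)
  · intro I hI x y hmem
    have hz := sphU_mem_norm hI hmem
    exact diffAt_tsum (fun n => n = m) _ (no_nearby_pole hz)
  · intro I hI x y
    exact hval_tsum hI (fun n => n = m) x y

end ML

/-- `(q-n)²+1` vanishes exactly on `n+𝕊`; the family `(((q-n)²+1)⁻¹)_{n∈ℤ}`
is summable off `⋃_{n∈ℤ}(n+𝕊)`; its sum `f` is slice regular there and has a pole at
each sphere `n+𝕊` with principal part `((q-n)²+1)⁻¹`, and no other poles. -/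
theorem mittag_leffler_example_one :
    (∀ (q : ℍ[ℝ]) (n : ℤ),
      (q - (n : ℍ[ℝ])) ^ 2 + 1 = 0 ↔ q ∈ qSphere (n : ℝ) 1) ∧
    (∀ q ∈ (⋃ n : ℤ, qSphere (n : ℝ) 1)ᶜ,
      Summable (fun n : ℤ => ((q - (n : ℍ[ℝ])) ^ 2 + 1)⁻¹)) ∧
    SliceRegularOn (fun q => ∑' n : ℤ, ((q - (n : ℍ[ℝ])) ^ 2 + 1)⁻¹)
      (⋃ n : ℤ, qSphere (n : ℝ) 1)ᶜ ∧
    ∀ m : ℤ, ∃ R > (0 : ℝ), ∃ h : ℍ[ℝ] → ℍ[ℝ],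
      SliceRegularOn h (sphU (m : ℝ) 1 R) ∧
      ∀ q ∈ sphU (m : ℝ) 1 R \ qSphere (m : ℝ) 1,
        (∑' n : ℤ, ((q - (n : ℍ[ℝ])) ^ 2 + 1)⁻¹) =
          ((q - (m : ℍ[ℝ])) ^ 2 + 1)⁻¹ + h q := by

  refine ⟨ML.part1, fun q _ => ML.summable_H q, ML.part3, ?_⟩
  intro m
  refine ⟨1/2, by norm_num,
    (fun q => ∑' n : ℤ, if n = m then 0 else ((q - (n : ℍ[ℝ])) ^ 2 + 1)⁻¹),
    ML.part4a m, ?_⟩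
  intro q _
  exact Summable.tsum_eq_add_tsum_ite (ML.summable_H q) m
end
end

section
/- Let i ∈ 𝕊 be the standard quaternion imaginary unit. For every q ∈ ℍ ∖ ⋃_{n∈ℤ}(n+𝕊), the family of quaternions (((q−n)²+1)^{−1}(q−n−i))_{n∈ℤ} is not summable in ℍ; in particular the series Σ_{n∈ℤ} ((q−n)²+1)^{−1}(q−n−i) does not converge unconditionally. -/
open Quaternion Filter Topology

noncomputable section

/-- The standard quaternionic imaginary unit `i`. -/
def qi : ℍ[ℝ] := ⟨0, 1, 0, 0⟩

/-! In any normed division ring, `‖((x² + 1)⁻¹ (x - u))‖ ≥ (‖x‖ - 1) / (‖x‖² + 1)` when `‖u‖ = 1`.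
For `x = q - k` with `k ∈ ℕ` large, `‖x‖` is comparable to `k`, so the `k`-th term has norm at
least `1 / (10 k)`. Summability in the finite-dimensional space `ℍ` gives summability of the norms,
hence of the harmonic series. -/

section NormedDivisionRing

variable {𝕜 : Type*} [NormedDivisionRing 𝕜]

theorem sub_one_div_sq_add_one_le_norm_inv_sq_add_one_mul_sub {u x : 𝕜} (hu : ‖u‖ = 1)
    (hx : 1 ≤ ‖x‖) : (‖x‖ - 1) / (‖x‖ ^ 2 + 1) ≤ ‖(x ^ 2 + 1)⁻¹ * (x - u)‖ := by
  rw [norm_mul, norm_inv, inv_mul_eq_div]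
  have hnum : ‖x‖ - 1 ≤ ‖x - u‖ := hu ▸ norm_sub_norm_le x u
  by_cases hzero : x ^ 2 + 1 = 0
  · -- the inverse is the junk value `0`, but `‖x‖ ^ 2 = ‖-1‖ = 1` makes the left-hand side vanish
    have hx1 : ‖x‖ = 1 := by
      have h : ‖x‖ ^ 2 = 1 := by rw [← norm_pow, eq_neg_of_add_eq_zero_left hzero, norm_neg, norm_one]
      nlinarith [norm_nonneg x]
    simp [hx1, hzero]
  · have hden : ‖x ^ 2 + 1‖ ≤ ‖x‖ ^ 2 + 1 := by
      calc ‖x ^ 2 + 1‖ ≤ ‖x ^ 2‖ + ‖(1 : 𝕜)‖ := norm_add_le _ _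
        _ = ‖x‖ ^ 2 + 1 := by rw [norm_pow, norm_one]
    exact div_le_div₀ (norm_nonneg _) hnum (norm_pos_iff.mpr hzero) hden

variable [NormedAlgebra ℝ 𝕜]

theorem inv_ten_mul_le_norm_inv_sq_add_one_mul_sub {u q : 𝕜} (hu : ‖u‖ = 1) {k : ℕ}
    (hk : 2 * ‖q‖ + 2 ≤ k) :
    (10 * (k : ℝ))⁻¹ ≤ ‖((q - k) ^ 2 + 1)⁻¹ * (q - k - u)‖ := by
  have hnorm_k : ‖(k : 𝕜)‖ = k := by
    rw [← map_natCast (algebraMap ℝ 𝕜), norm_algebraMap', Real.norm_natCast]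
  have hlower : k / 2 + 1 ≤ ‖q - k‖ := by
    have := norm_sub_norm_le (k : 𝕜) q
    rw [hnorm_k, norm_sub_rev] at this
    linarith [norm_nonneg q]
  have hk2 : (2 : ℝ) ≤ k := by linarith [norm_nonneg q]
  have hupper : ‖q - k‖ ≤ 2 * k := by
    have := norm_sub_le q (k : 𝕜)
    rw [hnorm_k] at this
    linarith [norm_nonneg q]
  calc (10 * (k : ℝ))⁻¹ = (k / 2) / (5 * k ^ 2) := by field_simp; ring
    _ ≤ (‖q - k‖ - 1) / (‖q - k‖ ^ 2 + 1) :=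
        div_le_div₀ (by linarith) (by linarith) (by positivity)
          (by nlinarith [norm_nonneg (q - k)])
    _ ≤ _ := sub_one_div_sq_add_one_le_norm_inv_sq_add_one_mul_sub hu (by linarith)

end NormedDivisionRing

theorem Real.not_summable_of_eventually_inv_mul_le {f : ℕ → ℝ} {c : ℝ} (hc : 0 < c)
    (hf : ∀ᶠ k : ℕ in atTop, (c * k)⁻¹ ≤ f k) : ¬ Summable f := by
  intro hsum
  have hharmonic : Summable fun k : ℕ => c⁻¹ * (k : ℝ)⁻¹ := by
    refine Summable.of_norm_bounded_eventually_nat hsum ?_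
    filter_upwards [hf] with k hk
    rwa [← mul_inv, Real.norm_of_nonneg (by positivity)]
  exact Real.not_summable_natCast_inv ((summable_mul_left_iff (inv_ne_zero hc.ne')).mp hharmonic)

theorem norm_qi : ‖qi‖ = 1 := by
  rw [norm_eq_sqrt_real_inner, Quaternion.inner_self, Quaternion.normSq_def']
  simp [qi]

/-- for any `q` off the spheres `n+𝕊`, the family
`(((q-n)²+1)⁻¹ (q-n-i))_{n∈ℤ}` is not summable. -/
theorem mittag_leffler_example_two_divergence :
    ∀ q ∈ (⋃ n : ℤ, qSphere (n : ℝ) 1)ᶜ,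
      ¬ Summable (fun n : ℤ =>
        ((q - (n : ℍ[ℝ])) ^ 2 + 1)⁻¹ * (q - (n : ℍ[ℝ]) - qi)) := by
  intro q _ hsum
  have hbound : ∀ᶠ k : ℕ in atTop,
      (10 * (k : ℝ))⁻¹ ≤ ‖((q - ((k : ℤ) : ℍ[ℝ])) ^ 2 + 1)⁻¹ * (q - ((k : ℤ) : ℍ[ℝ]) - qi)‖ := by
    filter_upwards [eventually_ge_atTop ⌈2 * ‖q‖ + 2⌉₊] with k hk
    simpa only [Int.cast_natCast] using
      inv_ten_mul_le_norm_inv_sq_add_one_mul_sub norm_qi (Nat.ceil_le.mp hk)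
  exact Real.not_summable_of_eventually_inv_mul_le (c := 10) (by norm_num) hbound
    (hsum.norm.comp_injective Nat.cast_injective)
end
end

section
/- Let i ∈ 𝕊 be the standard quaternion imaginary unit. The function h(q) = (q²+1)^{−1}(q−i) + Σ_{n≥1} [ ((q−n)²+1)^{−1}(q−n−i) + ((q+n)²+1)^{−1}(q+n−i) ], where the series of paired terms converges locally uniformly on ℍ ∖ ⋃_{n∈ℤ}(n+𝕊), is slice regular on ℍ ∖ ⋃_{n∈ℤ}(n+𝕊), and for every m ∈ ℤ there exist R > 0 and a slice regular function h_m : U(m+𝕊, R) → ℍ such that h(q) = ((q−m)²+1)^{−1}(q−m−i) + h_m(q) for all q ∈ U(m+𝕊, R) ∖ (m+𝕊); that is, h has a pole at each sphere n+𝕊, n ∈ ℤ, with principal part ((q−n)²+1)^{−1}(q−n−i), and no other poles. -/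
open Quaternion Filter Topology

noncomputable section

lemma mem_QS_iff_s15 {J : ℍ[ℝ]} :
    J ∈ QS ↔ J.re = 0 ∧ J.imI ^ 2 + J.imJ ^ 2 + J.imK ^ 2 = 1 := by
  constructor
  · intro h
    have h' : J * J = -1 := by rw [← pow_two]; exact h
    rw [Quaternion.ext_iff] at h'
    simp only [Quaternion.re_mul, Quaternion.imI_mul, Quaternion.imJ_mul, Quaternion.imK_mul,
      Quaternion.re_neg, Quaternion.re_one, Quaternion.imI_neg, Quaternion.imI_one,
      Quaternion.imJ_neg, Quaternion.imJ_one, Quaternion.imK_neg, Quaternion.imK_one] at h'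
    obtain ⟨h1, h2, h3, h4⟩ := h'
    rcases eq_or_ne J.re 0 with h0 | h0
    · exact ⟨h0, by nlinarith⟩
    · have hi : J.imI = 0 := by
        have := mul_eq_zero.mp (by linarith : J.re * (2 * J.imI) = 0)
        rcases this with h | h
        · exact absurd h h0
        · linarith
      have hj : J.imJ = 0 := by
        have := mul_eq_zero.mp (by linarith : J.re * (2 * J.imJ) = 0)
        rcases this with h | h
        · exact absurd h h0
        · linarith
      have hk : J.imK = 0 := by
        have := mul_eq_zero.mp (by linarith : J.re * (2 * J.imK) = 0)
        rcases this with h | h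
        · exact absurd h h0
        · linarith
      nlinarith
  · rintro ⟨h1, h2⟩
    show J ^ 2 = -1
    rw [pow_two, Quaternion.ext_iff]
    simp only [Quaternion.re_mul, Quaternion.imI_mul, Quaternion.imJ_mul, Quaternion.imK_mul,
      Quaternion.re_neg, Quaternion.re_one, Quaternion.imI_neg, Quaternion.imI_one,
      Quaternion.imJ_neg, Quaternion.imJ_one, Quaternion.imK_neg, Quaternion.imK_one, h1]
    refine ⟨by nlinarith, by ring, by ring, by ring⟩

lemma qi_mem_QS : qi ∈ QS := by
  rw [mem_QS_iff_s15]; norm_num [qi]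

lemma norm_real_add_smul (x y : ℝ) {J : ℍ[ℝ]} (hJ : J ∈ QS) :
    ‖(x : ℍ[ℝ]) + y • J‖ ^ 2 = x ^ 2 + y ^ 2 := by
  obtain ⟨h1, h2⟩ := mem_QS_iff_s15.mp hJ
  have hn : normSq ((x : ℍ[ℝ]) + y • J) = x ^ 2 + y ^ 2 := by
    rw [Quaternion.normSq_def']
    simp only [Quaternion.re_add, Quaternion.imI_add, Quaternion.imJ_add, Quaternion.imK_add,
      Quaternion.re_coe, Quaternion.imI_coe, Quaternion.imJ_coe, Quaternion.imK_coe,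
      Quaternion.re_smul, Quaternion.imI_smul, Quaternion.imJ_smul, Quaternion.imK_smul,
      smul_eq_mul, h1]
    ring_nf
    nlinarith [h2]
  rw [pow_two, ← Quaternion.normSq_eq_norm_mul_self, hn]

lemma mem_qSphere_iff {x : ℝ} {q : ℍ[ℝ]} :
    q ∈ qSphere x 1 ↔ (q - (x : ℍ[ℝ])) ^ 2 = -1 := by
  constructor
  · rintro ⟨I, hI, rfl⟩
    have hI' : I ^ 2 = -1 := hI
    simpa using hI'
  · intro h
    exact ⟨q - (x : ℍ[ℝ]), h, by simp⟩

lemma union_closed : IsClosed (⋃ n : ℤ, qSphere (n : ℝ) 1) := by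
  have : (⋃ n : ℤ, qSphere (n : ℝ) 1) =
      (QuaternionAlgebra.re ⁻¹' (Set.range ((↑) : ℤ → ℝ))) ∩
        {q : ℍ[ℝ] | q.imI ^ 2 + q.imJ ^ 2 + q.imK ^ 2 = 1} := by
    ext q
    simp only [Set.mem_iUnion, Set.mem_inter_iff, Set.mem_preimage, Set.mem_range,
      Set.mem_setOf_eq]
    constructor
    · rintro ⟨n, hn⟩
      rw [mem_qSphere_iff] at hn
      have := mem_QS_iff_s15.mp (hn : (q - ((n : ℝ) : ℍ[ℝ])) ∈ QS)
      simp only [Quaternion.re_sub, Quaternion.re_coe, Quaternion.imI_sub, Quaternion.imI_coe,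
        Quaternion.imJ_sub, Quaternion.imJ_coe, Quaternion.imK_sub, Quaternion.imK_coe,
        sub_zero] at this
      exact ⟨⟨n, by linarith [this.1]⟩, this.2⟩
    · rintro ⟨⟨n, hn⟩, hs⟩
      refine ⟨n, mem_qSphere_iff.mpr ?_⟩
      have hmem : (q - ((n : ℝ) : ℍ[ℝ])) ∈ QS := by
        rw [mem_QS_iff_s15]
        simp only [Quaternion.re_sub, Quaternion.re_coe, Quaternion.imI_sub, Quaternion.imI_coe,
          Quaternion.imJ_sub, Quaternion.imJ_coe, Quaternion.imK_sub, Quaternion.imK_coe,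
          sub_zero]
        exact ⟨by linarith, hs⟩
      exact hmem
  rw [this]
  refine IsClosed.inter (IsClosed.preimage (Quaternion.continuous_re) ?_) ?_
  · exact Int.isClosedEmbedding_coe_real.isClosed_range
  · exact isClosed_eq (((Quaternion.continuous_imI.pow 2).add
      (Quaternion.continuous_imJ.pow 2)).add (Quaternion.continuous_imK.pow 2))
      continuous_const

lemma Omega_open : IsOpen (⋃ n : ℤ, qSphere (n : ℝ) 1)ᶜ := union_closed.isOpen_compl

lemma sphU_open (x0 y0 R : ℝ) : IsOpen (sphU x0 y0 R) := by
  have : Continuous fun q : ℍ[ℝ] => ‖(q - (x0 : ℍ[ℝ])) ^ 2 + ((y0 : ℍ[ℝ])) ^ 2‖ := by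
    exact (((continuous_id.sub continuous_const).pow 2).add continuous_const).norm
  exact isOpen_lt this continuous_const

namespace MLaux

/-- The slice embedding `ℂ →ₐ[ℝ] ℍ` sending `i` to `I`. -/
def Φ (I : ℍ[ℝ]) (hI : I ∈ QS) : ℂ →ₐ[ℝ] ℍ[ℝ] :=
  Complex.liftAux I (by rw [← pow_two]; exact hI)

lemma Φ_apply (I : ℍ[ℝ]) (hI : I ∈ QS) (z : ℂ) :
    Φ I hI z = ((z.re : ℝ) : ℍ[ℝ]) + z.im • I := by
  rw [Φ, Complex.liftAux_apply]
  rfl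

lemma Φ_norm (I : ℍ[ℝ]) (hI : I ∈ QS) (z : ℂ) : ‖Φ I hI z‖ = ‖z‖ := by
  have h1 : ‖Φ I hI z‖ ^ 2 = z.re ^ 2 + z.im ^ 2 := by
    rw [Φ_apply]; exact norm_real_add_smul _ _ hI
  have h2 : ‖z‖ ^ 2 = z.re ^ 2 + z.im ^ 2 := by
    rw [Complex.sq_norm, Complex.normSq_apply]; ring
  nlinarith [norm_nonneg (Φ I hI z), norm_nonneg z]

/-- The complex module structure on `ℍ` induced by a slice. -/
def qmod (I : ℍ[ℝ]) (hI : I ∈ QS) : Module ℂ ℍ[ℝ] :=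
  Module.compHom ℍ[ℝ] (Φ I hI).toRingHom

def qns (I : ℍ[ℝ]) (hI : I ∈ QS) : NormedSpace ℂ ℍ[ℝ] :=
  { qmod I hI with
    norm_smul_le := fun z q => by
      show ‖Φ I hI z * q‖ ≤ ‖z‖ * ‖q‖
      rw [norm_mul, Φ_norm] }

lemma qsmul_def (I : ℍ[ℝ]) (hI : I ∈ QS) (z : ℂ) (q : ℍ[ℝ]) :
    (letI := qns I hI; z • q) = Φ I hI z * q := rfl

def DiffSlice (I : ℍ[ℝ]) (hI : I ∈ QS) (G : ℂ → ℍ[ℝ]) (z : ℂ) : Prop :=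
  letI := qns I hI
  DifferentiableAt ℂ G z

end MLaux
namespace MLaux

lemma towerR (I : ℍ[ℝ]) (hI : I ∈ QS) :
    letI := qns I hI; IsScalarTower ℝ ℂ ℍ[ℝ] := by
  letI := qns I hI
  refine ⟨fun r z q => ?_⟩
  rw [qsmul_def, qsmul_def, map_smul, smul_mul_assoc]

lemma towerC (I : ℍ[ℝ]) (hI : I ∈ QS) :
    letI := qns I hI; IsScalarTower ℂ ℂ ℍ[ℝ] := by
  letI := qns I hI
  refine ⟨fun z w q => ?_⟩
  rw [smul_eq_mul, qsmul_def, qsmul_def, qsmul_def, map_mul, mul_assoc]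

lemma Φ_I (I : ℍ[ℝ]) (hI : I ∈ QS) : Φ I hI Complex.I = I := by
  rw [Φ_apply]; simp

/-- The bridge: complex differentiability on slices implies slice regularity. -/
theorem sliceRegularOn_of {f : ℍ[ℝ] → ℍ[ℝ]} {Ω : Set ℍ[ℝ]}
    (h : ∀ (I : ℍ[ℝ]) (hI : I ∈ QS) (z : ℂ), Φ I hI z ∈ Ω →
      DiffSlice I hI (fun w => f (Φ I hI w)) z) :
    SliceRegularOn f Ω := by
  intro I hI p hp
  letI := qns I hI
  haveI := towerR I hI
  haveI := towerC I hI
  set E : (ℝ × ℝ) ≃L[ℝ] ℂ := Complex.equivRealProdCLM.symm with hE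
  set z : ℂ := E p with hz
  have hEz : ∀ p' : ℝ × ℝ, Φ I hI (E p') = ((p'.1 : ℝ) : ℍ[ℝ]) + p'.2 • I := by
    intro p'
    have : E p' = (p'.1 : ℂ) + p'.2 * Complex.I := Complex.equivRealProdCLM_symm_apply p'
    rw [this, Φ_apply]
    simp
  have hmem : Φ I hI z ∈ Ω := by rw [hz, hEz]; exact hp
  have hG : DifferentiableAt ℂ (fun w => f (Φ I hI w)) z := h I hI z hmem
  set G : ℂ → ℍ[ℝ] := fun w => f (Φ I hI w) with hGdef
  have hsf : sliceFun f I = G ∘ E := by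
    funext p'
    simp only [sliceFun, Function.comp_apply, hGdef, hEz]
  set L : ℂ →L[ℂ] ℍ[ℝ] := fderiv ℂ G z with hL
  have hfd : HasFDerivAt G (L.restrictScalars ℝ) z := (hG.hasFDerivAt).restrictScalars ℝ
  have hcomp : HasFDerivAt (G ∘ E) ((L.restrictScalars ℝ).comp
      (E : (ℝ × ℝ) →L[ℝ] ℂ)) p := by
    exact hfd.comp p (E.hasFDerivAt)
  constructor
  · rw [hsf]; exact hcomp.differentiableAt
  · have hfder : fderiv ℝ (sliceFun f I) p =
        (L.restrictScalars ℝ).comp (E : (ℝ × ℝ) →L[ℝ] ℂ) := by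
      rw [hsf]; exact hcomp.fderiv
    rw [hfder]
    have e10 : E (1, 0) = 1 := by
      rw [Complex.equivRealProdCLM_symm_apply]; simp
    have e01 : E (0, 1) = Complex.I := by
      rw [Complex.equivRealProdCLM_symm_apply]; simp
    simp only [ContinuousLinearMap.comp_apply, ContinuousLinearMap.coe_restrictScalars',
      ContinuousLinearEquiv.coe_coe, e10, e01]
    have hLI : L Complex.I = I * L 1 := by
      have : (Complex.I : ℂ) = Complex.I • (1 : ℂ) := by simp
      rw [this, L.map_smul, qsmul_def, Φ_I]
    rw [hLI, ← mul_assoc]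
    have : I * I = -1 := by rw [← pow_two]; exact hI
    rw [this]
    simp

end MLaux
namespace MLaux

/-- The basic singular term. -/
def F (n : ℤ) (q : ℍ[ℝ]) : ℍ[ℝ] := ((q - (n : ℍ[ℝ])) ^ 2 + 1)⁻¹ * (q - (n : ℍ[ℝ]) - qi)

lemma F_slice (I : ℍ[ℝ]) (hI : I ∈ QS) (n : ℤ) (w : ℂ) :
    F n (Φ I hI w) =
      (letI := qns I hI;
        ((((w - (n : ℂ)) ^ 2 + 1)⁻¹ * (w - (n : ℂ))) • (1 : ℍ[ℝ]) +
          (-(((w - (n : ℂ)) ^ 2 + 1)⁻¹)) • qi)) := by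
  letI := qns I hI
  have h1 : Φ I hI w - ((n : ℤ) : ℍ[ℝ]) = Φ I hI (w - (n : ℂ)) := by
    rw [map_sub, map_intCast]
  have h2 : (Φ I hI w - ((n : ℤ) : ℍ[ℝ])) ^ 2 + 1 = Φ I hI ((w - (n : ℂ)) ^ 2 + 1) := by
    rw [h1, map_add, map_pow, map_one]
  show ((Φ I hI w - ((n : ℤ) : ℍ[ℝ])) ^ 2 + 1)⁻¹ * (Φ I hI w - ((n : ℤ) : ℍ[ℝ]) - qi) = _
  rw [h2, ← map_inv₀, h1, qsmul_def, qsmul_def, map_mul, map_neg]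
  rw [mul_one, sub_eq_add_neg (Φ I hI (w - (n:ℂ))) qi, mul_add]
  rw [← map_mul, mul_neg, neg_mul]

lemma nonvanish (I : ℍ[ℝ]) (hI : I ∈ QS) (n : ℤ) (z : ℂ)
    (h : Φ I hI z ∉ qSphere (n : ℝ) 1) : (z - (n : ℂ)) ^ 2 + 1 ≠ 0 := by
  intro h0
  apply h
  rw [mem_qSphere_iff]
  have hc : ((n : ℝ) : ℍ[ℝ]) = ((n : ℤ) : ℍ[ℝ]) := by push_cast; rfl
  have h1 : Φ I hI z - ((n : ℝ) : ℍ[ℝ]) = Φ I hI (z - (n : ℂ)) := by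
    rw [hc, map_sub, map_intCast]
  rw [h1, ← map_pow, show (z - (n : ℂ)) ^ 2 = -1 from by linear_combination h0, map_neg, map_one]

lemma diffSlice_F (I : ℍ[ℝ]) (hI : I ∈ QS) (n : ℤ) (z : ℂ)
    (hz : (z - (n : ℂ)) ^ 2 + 1 ≠ 0) :
    DiffSlice I hI (fun w => F n (Φ I hI w)) z := by
  letI := qns I hI
  haveI := towerC I hI
  show DifferentiableAt ℂ _ z
  have heq : (fun w => F n (Φ I hI w)) = fun w =>
      ((((w - (n : ℂ)) ^ 2 + 1)⁻¹ * (w - (n : ℂ))) • (1 : ℍ[ℝ]) +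
        (-(((w - (n : ℂ)) ^ 2 + 1)⁻¹)) • qi) := funext fun w => F_slice I hI n w
  rw [heq]
  have hden : DifferentiableAt ℂ (fun w : ℂ => (w - (n : ℂ)) ^ 2 + 1) z :=
    ((differentiableAt_id.sub_const _).pow 2).add_const 1
  exact ((hden.inv hz).mul (differentiableAt_id.sub_const _)).smul_const _ |>.add
    ((hden.inv hz).neg.smul_const _)

end MLaux
namespace MLaux

lemma inv_add_inv_q (P Q : ℍ[ℝ]) (hP : P ≠ 0) (hQ : Q ≠ 0) (h : Commute P Q) :
    P⁻¹ + Q⁻¹ = (P + Q) * (P * Q)⁻¹ := by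
  rw [mul_inv_rev, add_mul]
  have h1 : P * (Q⁻¹ * P⁻¹) = Q⁻¹ := by
    rw [← mul_assoc, (h.inv_right₀).eq, mul_assoc, mul_inv_cancel₀ hP, mul_one]
  have h2 : Q * (Q⁻¹ * P⁻¹) = P⁻¹ := by
    rw [← mul_assoc, mul_inv_cancel₀ hQ, one_mul]
  rw [h1, h2, add_comm]

lemma inv_sub_inv_q (P Q : ℍ[ℝ]) (hP : P ≠ 0) (hQ : Q ≠ 0) :
    Q⁻¹ - P⁻¹ = Q⁻¹ * (P - Q) * P⁻¹ := by
  rw [mul_sub, sub_mul, mul_assoc, mul_inv_cancel₀ hP, mul_one, inv_mul_cancel₀ hQ, one_mul]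

set_option maxHeartbeats 1000000 in
lemma pair_bound {C : ℝ} (hC : 0 ≤ C) {q : ℍ[ℝ]} (hq : ‖q‖ ≤ C) {n : ℕ}
    (hn : 2 * C + 4 ≤ (n : ℝ)) :
    ‖F (n : ℤ) q + F (-(n : ℤ)) q‖ ≤ 112 * (C + 1) / (n : ℝ) ^ 2 := by
  set t : ℝ := (n : ℝ) with ht
  have ht4 : (4 : ℝ) ≤ t := by linarith
  have ht0 : (0 : ℝ) < t := by linarith
  set c : ℍ[ℝ] := ((t : ℝ) : ℍ[ℝ]) with hcdef
  have hcast1 : (((n : ℤ) : ℍ[ℝ])) = c := by push_cast; rfl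
  have hcast2 : (((-(n : ℤ)) : ℤ) : ℍ[ℝ]) = -c := by push_cast; rfl
  have hnormc : ‖c‖ = t := by
    rw [hcdef, Quaternion.norm_coe, Real.norm_eq_abs, abs_of_pos ht0]
  set P : ℍ[ℝ] := (q - c) ^ 2 + 1 with hPdef
  set Q : ℍ[ℝ] := (q + c) ^ 2 + 1 with hQdef
  -- lower bound for ‖P‖ and ‖Q‖
  have hsubnorm : t - C ≤ ‖q - c‖ := by
    have h1 : ‖c‖ - ‖q‖ ≤ ‖c - q‖ := norm_sub_norm_le c q
    rw [norm_sub_rev] at h1; linarith [hnormc ▸ h1]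
  have haddnorm : t - C ≤ ‖q + c‖ := by
    have h1 : ‖c‖ - ‖-q‖ ≤ ‖c - -q‖ := norm_sub_norm_le c (-q)
    rw [sub_neg_eq_add, norm_neg] at h1
    rw [add_comm]; linarith [hnormc ▸ h1]
  have hPlow : t ^ 2 / 4 ≤ ‖P‖ := by
    have h2 : ‖(q - c) ^ 2‖ = ‖q - c‖ ^ 2 := norm_pow _ 2
    have h3 : ‖(q - c) ^ 2‖ ≤ ‖P‖ + 1 := by
      have : (q - c) ^ 2 = P - 1 := by rw [hPdef, add_sub_cancel_right]
      rw [this]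
      calc ‖P - 1‖ ≤ ‖P‖ + ‖(1 : ℍ[ℝ])‖ := norm_sub_le _ _
        _ = ‖P‖ + 1 := by rw [norm_one]
    nlinarith [hsubnorm, norm_nonneg (q - c)]
  have hQlow : t ^ 2 / 4 ≤ ‖Q‖ := by
    have h2 : ‖(q + c) ^ 2‖ = ‖q + c‖ ^ 2 := norm_pow _ 2
    have h3 : ‖(q + c) ^ 2‖ ≤ ‖Q‖ + 1 := by
      have : (q + c) ^ 2 = Q - 1 := by rw [hQdef, add_sub_cancel_right]
      rw [this]
      calc ‖Q - 1‖ ≤ ‖Q‖ + ‖(1 : ℍ[ℝ])‖ := norm_sub_le _ _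
        _ = ‖Q‖ + 1 := by rw [norm_one]
    nlinarith [haddnorm, norm_nonneg (q + c)]
  have ha : (0 : ℝ) < t ^ 2 / 4 := by positivity
  have hP0 : P ≠ 0 := by intro h; rw [h, norm_zero] at hPlow; linarith
  have hQ0 : Q ≠ 0 := by intro h; rw [h, norm_zero] at hQlow; linarith
  -- commutation
  have hqc : c * q = q * c := (Quaternion.coe_commute _ _).eq
  have hcomm : Commute P Q := by
    have h0 : Commute (q - c) (q + c) := by
      have c1 : Commute (q - c) q :=
        ((Commute.refl q).sub_left ((Quaternion.coe_commute _ q)))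
      have c2 : Commute (q - c) c :=
        (((Quaternion.coe_commute _ q).symm).sub_left (Commute.refl c))
      exact c1.add_right c2
    exact ((h0.pow_pow 2 2).add_right (Commute.one_right _)).add_left
      (Commute.one_left _)
  -- structural identities
  have hsum : P + Q = q ^ 2 + q ^ 2 + (c ^ 2 + c ^ 2) + (1 + 1) := by
    rw [hPdef, hQdef]; noncomm_ring
  have hdiff : P - Q = -(q * c + c * q + (q * c + c * q)) := by
    rw [hPdef, hQdef]; noncomm_ring
  have hkey : F (n : ℤ) q + F (-(n : ℤ)) q =
      (P + Q) * ((P * Q)⁻¹ * (q - qi)) + (Q⁻¹ * (P - Q) * P⁻¹) * c := by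
    simp only [F]
    rw [hcast1, hcast2, sub_neg_eq_add]
    have step1 : P⁻¹ * (q - c - qi) + Q⁻¹ * (q + c - qi) =
        (P⁻¹ + Q⁻¹) * (q - qi) + (Q⁻¹ - P⁻¹) * c := by noncomm_ring
    rw [step1, inv_add_inv_q P Q hP0 hQ0 hcomm, inv_sub_inv_q P Q hP0 hQ0, mul_assoc]
  rw [hkey]
  -- norm estimates
  have hPQinv : ‖(P * Q)⁻¹‖ ≤ 16 / t ^ 4 := by
    rw [norm_inv, norm_mul]
    have h1 : t ^ 2 / 4 * (t ^ 2 / 4) ≤ ‖P‖ * ‖Q‖ :=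
      mul_le_mul hPlow hQlow (le_of_lt ha) (norm_nonneg _)
    have h2 : (‖P‖ * ‖Q‖)⁻¹ ≤ (t ^ 2 / 4 * (t ^ 2 / 4))⁻¹ :=
      inv_anti₀ (by positivity) h1
    calc (‖P‖ * ‖Q‖)⁻¹ ≤ (t ^ 2 / 4 * (t ^ 2 / 4))⁻¹ := h2
      _ = 16 / t ^ 4 := by field_simp; ring
  have hsumnorm : ‖P + Q‖ ≤ 3 * t ^ 2 := by
    rw [hsum]
    have hq2 : ‖q ^ 2‖ ≤ C ^ 2 := by
      rw [norm_pow]; exact pow_le_pow_left₀ (norm_nonneg q) hq 2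
    have hc2 : ‖c ^ 2‖ = t ^ 2 := by rw [norm_pow, hnormc]
    calc ‖q ^ 2 + q ^ 2 + (c ^ 2 + c ^ 2) + (1 + 1)‖
        ≤ ‖q ^ 2 + q ^ 2 + (c ^ 2 + c ^ 2)‖ + ‖(1 + 1 : ℍ[ℝ])‖ := norm_add_le _ _
      _ ≤ ‖q ^ 2 + q ^ 2‖ + ‖c ^ 2 + c ^ 2‖ + ‖(1 + 1 : ℍ[ℝ])‖ := by
          linarith [norm_add_le (q ^ 2 + q ^ 2) (c ^ 2 + c ^ 2)]
      _ ≤ (‖q ^ 2‖ + ‖q ^ 2‖) + (‖c ^ 2‖ + ‖c ^ 2‖) + (‖(1:ℍ[ℝ])‖ + ‖(1:ℍ[ℝ])‖) := by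
          linarith [norm_add_le (q ^ 2) (q ^ 2), norm_add_le (c ^ 2) (c ^ 2),
            norm_add_le (1 : ℍ[ℝ]) 1]
      _ ≤ 3 * t ^ 2 := by rw [norm_one, hc2]; nlinarith
  have hdiffnorm : ‖P - Q‖ ≤ 4 * C * t := by
    rw [hdiff, norm_neg]
    have h1 : ‖q * c‖ ≤ C * t := by rw [norm_mul, hnormc]; exact mul_le_mul_of_nonneg_right hq (le_of_lt ht0)
    have h2 : ‖c * q‖ ≤ C * t := by
      rw [norm_mul, hnormc, mul_comm t]
      exact mul_le_mul_of_nonneg_right hq (le_of_lt ht0)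
    calc ‖q * c + c * q + (q * c + c * q)‖
        ≤ ‖q * c + c * q‖ + ‖q * c + c * q‖ := norm_add_le _ _
      _ ≤ (‖q * c‖ + ‖c * q‖) + (‖q * c‖ + ‖c * q‖) := by
          linarith [norm_add_le (q * c) (c * q)]
      _ ≤ 4 * C * t := by linarith
  have hqqi : ‖q - qi‖ ≤ C + 1 := by
    have : ‖qi‖ = 1 := by
      have h2 : ‖qi‖ ^ 2 = 1 := by
        rw [pow_two, ← Quaternion.normSq_eq_norm_mul_self, Quaternion.normSq_def']
        norm_num [qi]
      nlinarith [norm_nonneg qi]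
    calc ‖q - qi‖ ≤ ‖q‖ + ‖qi‖ := norm_sub_le _ _
      _ ≤ C + 1 := by rw [this]; linarith
  have hPinv : ‖P⁻¹‖ ≤ 4 / t ^ 2 := by
    rw [norm_inv]
    calc ‖P‖⁻¹ ≤ (t ^ 2 / 4)⁻¹ := inv_anti₀ ha hPlow
      _ = 4 / t ^ 2 := by field_simp
  have hQinv : ‖Q⁻¹‖ ≤ 4 / t ^ 2 := by
    rw [norm_inv]
    calc ‖Q‖⁻¹ ≤ (t ^ 2 / 4)⁻¹ := inv_anti₀ ha hQlow
      _ = 4 / t ^ 2 := by field_simp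
  have hterm1 : ‖(P + Q) * ((P * Q)⁻¹ * (q - qi))‖ ≤ 48 * (C + 1) / t ^ 2 := by
    rw [norm_mul, norm_mul]
    calc ‖P + Q‖ * (‖(P * Q)⁻¹‖ * ‖q - qi‖)
        ≤ 3 * t ^ 2 * (16 / t ^ 4 * (C + 1)) := by
          apply mul_le_mul hsumnorm _ (by positivity) (by positivity)
          exact mul_le_mul hPQinv hqqi (norm_nonneg _) (by positivity)
      _ = 48 * (C + 1) / t ^ 2 := by field_simp; ring
  have hterm2 : ‖Q⁻¹ * (P - Q) * P⁻¹ * c‖ ≤ 64 * C / t ^ 2 := by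
    rw [norm_mul, norm_mul, norm_mul, hnormc]
    calc ‖Q⁻¹‖ * ‖P - Q‖ * ‖P⁻¹‖ * t
        ≤ (4 / t ^ 2) * (4 * C * t) * (4 / t ^ 2) * t := by
          apply mul_le_mul_of_nonneg_right _ (le_of_lt ht0)
          apply mul_le_mul _ hPinv (norm_nonneg _) (by positivity)
          exact mul_le_mul hQinv hdiffnorm (norm_nonneg _) (by positivity)
      _ = 64 * C / t ^ 2 := by field_simp; ring
  calc ‖(P + Q) * ((P * Q)⁻¹ * (q - qi)) + Q⁻¹ * (P - Q) * P⁻¹ * c‖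
      ≤ ‖(P + Q) * ((P * Q)⁻¹ * (q - qi))‖ + ‖Q⁻¹ * (P - Q) * P⁻¹ * c‖ := norm_add_le _ _
    _ ≤ 48 * (C + 1) / t ^ 2 + 64 * C / t ^ 2 := by linarith
    _ ≤ 112 * (C + 1) / t ^ 2 := by
        rw [← add_div, div_le_div_iff₀ (by positivity) (by positivity)]
        nlinarith

end MLaux
namespace MLaux

lemma myTUO {u : ℕ → ℝ} (hu : Summable u) {f : ℕ → ℍ[ℝ] → ℍ[ℝ]} {s : Set ℍ[ℝ]}
    (hfu : ∀ᶠ n in Filter.atTop, ∀ x ∈ s, ‖f n x‖ ≤ u n) :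
    TendstoUniformlyOn (fun N x => ∑ k ∈ Finset.range N, f k x)
      (fun x => ∑' k, f k x) Filter.atTop s :=
  fun v hv => tendsto_finset_range.eventually
    (tendstoUniformlyOn_tsum_of_cofinite_eventually hu (Nat.cofinite_eq_atTop ▸ hfu) v hv)

lemma summable_Adiv (A : ℝ) : Summable (fun k : ℕ => A / (k : ℝ) ^ 2) := by
  have h := (Real.summable_one_div_nat_pow (p := 2)).mpr (by norm_num)
  have := h.mul_left A
  refine this.congr fun k => ?_
  rw [mul_one_div]

lemma conv_master {v : ℕ → ℍ[ℝ] → ℍ[ℝ]}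
    (hv : ∀ C : ℝ, 0 ≤ C → ∃ A : ℝ, ∀ᶠ (k : ℕ) in Filter.atTop,
      ∀ q : ℍ[ℝ], ‖q‖ ≤ C → ‖v k q‖ ≤ A / (k : ℝ) ^ 2) :
    (∀ q : ℍ[ℝ], Summable (fun k => v k q)) ∧
      TendstoLocallyUniformly (fun N q => ∑ k ∈ Finset.range N, v k q)
        (fun q => ∑' k, v k q) Filter.atTop := by
  constructor
  · intro q
    obtain ⟨A, hA⟩ := hv ‖q‖ (norm_nonneg q)
    exact Summable.of_norm_bounded_eventually_nat
      (summable_Adiv A) (hA.mono fun k hk => hk q le_rfl)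
  · rw [tendstoLocallyUniformly_iff_forall_isCompact]
    intro K hK
    obtain ⟨C, hC⟩ := hK.isBounded.subset_closedBall 0
    obtain ⟨A, hA⟩ := hv (max C 0) (le_max_right _ _)
    apply myTUO (summable_Adiv A)
    refine hA.mono fun k hk x hx => hk x ?_
    have := hC hx
    rw [Metric.mem_closedBall, dist_zero_right] at this
    exact this.trans (le_max_left _ _)

end MLaux
namespace MLaux

lemma Φ_cont (I : ℍ[ℝ]) (hI : I ∈ QS) : Continuous (Φ I hI) := by
  have : (Φ I hI : ℂ → ℍ[ℝ]) = fun z => ((z.re : ℝ) : ℍ[ℝ]) + z.im • I :=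
    funext (Φ_apply I hI)
  rw [this]
  exact (Quaternion.continuous_coe.comp Complex.continuous_re).add
    (Complex.continuous_im.smul continuous_const)

lemma diffSlice_lim {v : ℕ → ℍ[ℝ] → ℍ[ℝ]} {Ω : Set ℍ[ℝ]} (hΩ : IsOpen Ω)
    (hconv : TendstoLocallyUniformly (fun N q => ∑ k ∈ Finset.range N, v k q)
      (fun q => ∑' k, v k q) Filter.atTop)
    (hterm : ∀ (k : ℕ) (I : ℍ[ℝ]) (hI : I ∈ QS) (z : ℂ), Φ I hI z ∈ Ω →
      DiffSlice I hI (fun w => v k (Φ I hI w)) z)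
    (I : ℍ[ℝ]) (hI : I ∈ QS) (z : ℂ) (hz : Φ I hI z ∈ Ω) :
    DiffSlice I hI (fun w => ∑' k, v k (Φ I hI w)) z := by
  letI := qns I hI
  show DifferentiableAt ℂ _ z
  set s : Set ℂ := (Φ I hI) ⁻¹' Ω with hs
  have hsopen : IsOpen s := hΩ.preimage (Φ_cont I hI)
  have hTLUO : TendstoLocallyUniformlyOn
      (fun N => (fun q => ∑ k ∈ Finset.range N, v k q) ∘ (Φ I hI))
      ((fun q => ∑' k, v k q) ∘ (Φ I hI)) Filter.atTop s :=
    (hconv.tendstoLocallyUniformlyOn).comp _ (fun x hx => hx) (Φ_cont I hI).continuousOn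
  have hdiff : ∀ N : ℕ, DifferentiableOn ℂ
      ((fun q => ∑ k ∈ Finset.range N, v k q) ∘ (Φ I hI)) s := by
    intro N z' hz'
    have : DifferentiableAt ℂ (fun w => ∑ k ∈ Finset.range N, v k (Φ I hI w)) z' :=
      DifferentiableAt.fun_sum (fun k _ => hterm k I hI z' hz')
    exact this.differentiableWithinAt
  have hlim := hTLUO.differentiableOn (Filter.Eventually.of_forall hdiff) hsopen
  exact ((hlim z hz).differentiableAt (hsopen.mem_nhds hz))

end MLaux
namespace MLaux

def vfull : ℕ → ℍ[ℝ] → ℍ[ℝ] := fun k q =>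
  if k = 0 then F 0 q else F (k : ℤ) q + F (-(k : ℤ)) q

def vdel (m : ℤ) : ℕ → ℍ[ℝ] → ℍ[ℝ] := fun k q =>
  vfull k q - if k = m.natAbs then F m q else 0

lemma vfull_bound : ∀ C : ℝ, 0 ≤ C → ∃ A : ℝ, ∀ᶠ (k : ℕ) in Filter.atTop,
    ∀ q : ℍ[ℝ], ‖q‖ ≤ C → ‖vfull k q‖ ≤ A / (k : ℝ) ^ 2 := by
  intro C hC
  refine ⟨112 * (C + 1), ?_⟩
  filter_upwards [Filter.eventually_ge_atTop (Nat.ceil (2 * C + 4))] with k hk q hq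
  have hcast : 2 * C + 4 ≤ (k : ℝ) := le_trans (Nat.le_ceil _) (Nat.cast_le.mpr hk)
  have hk0 : k ≠ 0 := by
    intro h; rw [h] at hcast; push_cast at hcast; linarith
  rw [vfull, if_neg hk0]
  exact pair_bound hC hq hcast

lemma vshift_bound : ∀ C : ℝ, 0 ≤ C → ∃ A : ℝ, ∀ᶠ (k : ℕ) in Filter.atTop,
    ∀ q : ℍ[ℝ], ‖q‖ ≤ C → ‖vfull (k + 1) q‖ ≤ A / (k : ℝ) ^ 2 := by
  intro C hC
  refine ⟨112 * (C + 1), ?_⟩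
  filter_upwards [Filter.eventually_ge_atTop (Nat.ceil (2 * C + 4))] with k hk q hq
  have hcast : 2 * C + 4 ≤ (k : ℝ) := le_trans (Nat.le_ceil _) (Nat.cast_le.mpr hk)
  have hcast' : 2 * C + 4 ≤ ((k + 1 : ℕ) : ℝ) := by push_cast; linarith
  have hk0 : (k : ℝ) ≥ 1 := by linarith
  rw [vfull, if_neg (Nat.succ_ne_zero k)]
  refine le_trans (pair_bound hC hq hcast') ?_
  apply div_le_div_of_nonneg_left (by positivity) (by positivity)
  push_cast; nlinarith

lemma vdel_bound (m : ℤ) : ∀ C : ℝ, 0 ≤ C → ∃ A : ℝ, ∀ᶠ (k : ℕ) in Filter.atTop,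
    ∀ q : ℍ[ℝ], ‖q‖ ≤ C → ‖vdel m k q‖ ≤ A / (k : ℝ) ^ 2 := by
  intro C hC
  obtain ⟨A, hA⟩ := vfull_bound C hC
  refine ⟨A, ?_⟩
  filter_upwards [hA, Filter.eventually_ge_atTop (m.natAbs + 1)] with k hk hk2 q hq
  rw [vdel, if_neg (by omega), sub_zero]
  exact hk q hq

lemma vfull_succ (k : ℕ) (q : ℍ[ℝ]) :
    vfull (k + 1) q =
      ((q - ((k + 1 : ℕ) : ℍ[ℝ])) ^ 2 + 1)⁻¹ * (q - ((k + 1 : ℕ) : ℍ[ℝ]) - qi) +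
        ((q + ((k + 1 : ℕ) : ℍ[ℝ])) ^ 2 + 1)⁻¹ * (q + ((k + 1 : ℕ) : ℍ[ℝ]) - qi) := by
  rw [vfull, if_neg (Nat.succ_ne_zero k)]
  simp only [F]
  have h1 : ((((k + 1 : ℕ) : ℤ)) : ℍ[ℝ]) = ((k + 1 : ℕ) : ℍ[ℝ]) := by push_cast; abel
  have h2 : (((-((k + 1 : ℕ) : ℤ)) : ℤ) : ℍ[ℝ]) = -((k + 1 : ℕ) : ℍ[ℝ]) := by push_cast; abel
  rw [h2, h1, sub_neg_eq_add]

lemma vfull_zero (q : ℍ[ℝ]) : vfull 0 q = (q ^ 2 + 1)⁻¹ * (q - qi) := by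
  rw [vfull, if_pos rfl, F]
  norm_num

/-- Spheres `n+𝕊` with `n ≠ m` miss `sphU m 1 1`. -/
lemma sphere_disjoint {m n : ℤ} (hnm : n ≠ m) {q : ℍ[ℝ]}
    (hq : q ∈ qSphere ((n : ℤ) : ℝ) 1) : q ∉ sphU ((m : ℤ) : ℝ) 1 1 := by
  intro hmem
  set J : ℍ[ℝ] := q - (((n : ℤ) : ℝ) : ℍ[ℝ]) with hJdef
  have hJ : J ^ 2 = -1 := mem_qSphere_iff.mp hq
  have hJQS : J ∈ QS := hJ
  set d : ℝ := ((n : ℤ) : ℝ) - ((m : ℤ) : ℝ) with hddef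
  have hd1 : 1 ≤ |d| := by
    rw [hddef, ← Int.cast_sub, ← Int.cast_abs]
    exact_mod_cast Int.one_le_abs (sub_ne_zero.mpr hnm)
  have hqm : q - (((m : ℤ) : ℝ) : ℍ[ℝ]) = J + ((d : ℝ) : ℍ[ℝ]) := by
    rw [hJdef, hddef]; push_cast; abel
  have hcj : ((d : ℝ) : ℍ[ℝ]) * J = J * ((d : ℝ) : ℍ[ℝ]) := Quaternion.coe_commutes d J
  have hexp : (q - (((m : ℤ) : ℝ) : ℍ[ℝ])) ^ 2 + 1 =
      ((d ^ 2 : ℝ) : ℍ[ℝ]) + (2 * d) • J := by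
    rw [hqm, pow_two]
    have e1 : (J + ((d : ℝ) : ℍ[ℝ])) * (J + ((d : ℝ) : ℍ[ℝ])) =
        J * J + (((d : ℝ) : ℍ[ℝ]) * J + ((d : ℝ) : ℍ[ℝ]) * J) +
          ((d : ℝ) : ℍ[ℝ]) * ((d : ℝ) : ℍ[ℝ]) := by
      rw [mul_add, add_mul, add_mul, hcj]; abel
    rw [e1, ← pow_two, hJ]
    rw [← Quaternion.coe_mul, ← pow_two]
    have e2 : ((d : ℝ) : ℍ[ℝ]) * J + ((d : ℝ) : ℍ[ℝ]) * J = (2 * d) • J := by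
      rw [Quaternion.coe_mul_eq_smul]; module
    rw [e2]; abel
  have hnorm : ‖(q - (((m : ℤ) : ℝ) : ℍ[ℝ])) ^ 2 + 1‖ ^ 2 = (d ^ 2) ^ 2 + (2 * d) ^ 2 := by
    rw [hexp]; exact norm_real_add_smul _ _ hJQS
  have hge : (1 : ℝ) ≤ ‖(q - (((m : ℤ) : ℝ) : ℍ[ℝ])) ^ 2 + 1‖ := by
    nlinarith [norm_nonneg ((q - (((m : ℤ) : ℝ) : ℍ[ℝ])) ^ 2 + 1), sq_abs d,
      abs_nonneg d]
  have hlt : ‖(q - (((m : ℤ) : ℝ) : ℍ[ℝ])) ^ 2 + 1‖ < 1 := by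
    have := hmem
    rw [sphU] at this
    simp only [Set.mem_setOf_eq, Quaternion.coe_one, one_pow] at this
    exact this
  linarith

end MLaux
namespace MLaux

lemma diffSlice_add {I : ℍ[ℝ]} {hI : I ∈ QS} {G H : ℂ → ℍ[ℝ]} {z : ℂ}
    (hG : DiffSlice I hI G z) (hH : DiffSlice I hI H z) :
    DiffSlice I hI (fun w => G w + H w) z := by
  letI := qns I hI
  exact DifferentiableAt.add hG hH

lemma diffSlice_const (I : ℍ[ℝ]) (hI : I ∈ QS) (c : ℍ[ℝ]) (z : ℂ) :
    DiffSlice I hI (fun _ => c) z := by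
  letI := qns I hI
  exact differentiableAt_const c

lemma hterm_full : ∀ (k : ℕ) (I : ℍ[ℝ]) (hI : I ∈ QS) (z : ℂ),
    Φ I hI z ∈ (⋃ n : ℤ, qSphere (n : ℝ) 1)ᶜ →
    DiffSlice I hI (fun w => vfull k (Φ I hI w)) z := by
  intro k I hI z hz
  have hnv : ∀ n : ℤ, (z - (n : ℂ)) ^ 2 + 1 ≠ 0 := fun n =>
    nonvanish I hI n z (fun hmem => hz (Set.mem_iUnion.mpr ⟨n, hmem⟩))
  cases k with
  | zero =>
    have he : (fun w => vfull 0 (Φ I hI w)) = fun w => F 0 (Φ I hI w) := by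
      funext w; rw [vfull, if_pos rfl]
    rw [he]
    exact diffSlice_F I hI 0 z (by simpa using hnv 0)
  | succ k =>
    have he : (fun w => vfull (k + 1) (Φ I hI w)) =
        fun w => F ((k + 1 : ℕ) : ℤ) (Φ I hI w) + F (-((k + 1 : ℕ) : ℤ)) (Φ I hI w) := by
      funext w; rw [vfull, if_neg (Nat.succ_ne_zero k)]
    rw [he]
    exact diffSlice_add (diffSlice_F I hI _ z (hnv _)) (diffSlice_F I hI _ z (hnv _))

lemma hterm_del (m : ℤ) : ∀ (k : ℕ) (I : ℍ[ℝ]) (hI : I ∈ QS) (z : ℂ),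
    Φ I hI z ∈ sphU ((m : ℤ) : ℝ) 1 1 →
    DiffSlice I hI (fun w => vdel m k (Φ I hI w)) z := by
  intro k I hI z hz
  have hnv : ∀ n : ℤ, n ≠ m → (z - (n : ℂ)) ^ 2 + 1 ≠ 0 := fun n hn =>
    nonvanish I hI n z (fun hmem => sphere_disjoint hn hmem hz)
  by_cases hk : k = m.natAbs
  · subst hk
    by_cases hm : m = 0
    · subst hm
      have he : (fun w => vdel 0 (Int.natAbs 0) (Φ I hI w)) = fun _ => (0 : ℍ[ℝ]) := by
        funext w; simp [vdel, vfull]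
      rw [he]
      exact diffSlice_const I hI 0 z
    · have he : (fun w => vdel m m.natAbs (Φ I hI w)) = fun w => F (-m) (Φ I hI w) := by
        funext w
        rw [vdel, if_pos rfl, vfull, if_neg (by omega : m.natAbs ≠ 0)]
        rcases Int.natAbs_eq m with h | h
        · rw [← h, add_sub_cancel_left]
        · rw [show ((m.natAbs : ℤ)) = -m from by omega, neg_neg, add_sub_cancel_right]
      rw [he]
      exact diffSlice_F I hI (-m) z (hnv (-m) (by omega))
  · have he : (fun w => vdel m k (Φ I hI w)) = fun w => vfull k (Φ I hI w) := by
      funext w; rw [vdel, if_neg hk, sub_zero]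
    rw [he]
    cases k with
    | zero =>
      have he2 : (fun w => vfull 0 (Φ I hI w)) = fun w => F 0 (Φ I hI w) := by
        funext w; rw [vfull, if_pos rfl]
      rw [he2]
      exact diffSlice_F I hI 0 z (by simpa using hnv 0 (by omega))
    | succ k =>
      have he2 : (fun w => vfull (k + 1) (Φ I hI w)) =
          fun w => F ((k + 1 : ℕ) : ℤ) (Φ I hI w) + F (-((k + 1 : ℕ) : ℤ)) (Φ I hI w) := by
        funext w; rw [vfull, if_neg (Nat.succ_ne_zero k)]
      rw [he2]
      exact diffSlice_add (diffSlice_F I hI _ z (hnv _ (by omega)))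
        (diffSlice_F I hI _ z (hnv _ (by omega)))

end MLaux

/-- the series of paired terms
`Σ_{n≥1} [((q-n)²+1)⁻¹(q-n-i) + ((q+n)²+1)⁻¹(q+n-i)]` converges locally uniformly on
`ℍ ∖ ⋃_{n∈ℤ}(n+𝕊)` to some `g`; the function `h(q) = (q²+1)⁻¹(q-i) + g(q)` is slice
regular there and has a pole at each sphere `m+𝕊` with principal part
`((q-m)²+1)⁻¹(q-m-i)`, and no other poles. -/
theorem mittag_leffler_example_two :
    ∃ g : ℍ[ℝ] → ℍ[ℝ],
      TendstoLocallyUniformlyOn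
        (fun (N : ℕ) (q : ℍ[ℝ]) => ∑ n ∈ Finset.Icc 1 N,
          (((q - (n : ℍ[ℝ])) ^ 2 + 1)⁻¹ * (q - (n : ℍ[ℝ]) - qi) +
            ((q + (n : ℍ[ℝ])) ^ 2 + 1)⁻¹ * (q + (n : ℍ[ℝ]) - qi)))
        g Filter.atTop (⋃ n : ℤ, qSphere (n : ℝ) 1)ᶜ ∧
      SliceRegularOn (fun q => (q ^ 2 + 1)⁻¹ * (q - qi) + g q)
        (⋃ n : ℤ, qSphere (n : ℝ) 1)ᶜ ∧
      ∀ m : ℤ, ∃ R > (0 : ℝ), ∃ hm : ℍ[ℝ] → ℍ[ℝ],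
        SliceRegularOn hm (sphU (m : ℝ) 1 R) ∧
        ∀ q ∈ sphU (m : ℝ) 1 R \ qSphere (m : ℝ) 1,
          (q ^ 2 + 1)⁻¹ * (q - qi) + g q =
            ((q - (m : ℍ[ℝ])) ^ 2 + 1)⁻¹ * (q - (m : ℍ[ℝ]) - qi) + hm q := by
  classical
  obtain ⟨hsum_full, hTLU_full⟩ := MLaux.conv_master MLaux.vfull_bound
  obtain ⟨hsum_sh, hTLU_sh⟩ := MLaux.conv_master MLaux.vshift_bound
  refine ⟨fun q => ∑' k : ℕ, MLaux.vfull (k + 1) q, ?_, ?_, ?_⟩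
  · -- convergence
    have hIcc : (fun (N : ℕ) (q : ℍ[ℝ]) => ∑ n ∈ Finset.Icc 1 N,
          (((q - (n : ℍ[ℝ])) ^ 2 + 1)⁻¹ * (q - (n : ℍ[ℝ]) - qi) +
            ((q + (n : ℍ[ℝ])) ^ 2 + 1)⁻¹ * (q + (n : ℍ[ℝ]) - qi))) =
        fun (N : ℕ) (q : ℍ[ℝ]) => ∑ k ∈ Finset.range N, MLaux.vfull (k + 1) q := by
      funext N q
      rw [← Finset.Ico_add_one_right_eq_Icc, Finset.sum_Ico_eq_sum_range]
      refine Finset.sum_congr (by simp) fun i _ => ?_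
      rw [MLaux.vfull_succ]
      norm_num [add_comm 1 i]
    rw [hIcc]
    exact hTLU_sh.tendstoLocallyUniformlyOn
  · -- slice regularity
    have hfun : (fun q => (q ^ 2 + 1)⁻¹ * (q - qi) + ∑' k : ℕ, MLaux.vfull (k + 1) q) =
        fun q => ∑' k : ℕ, MLaux.vfull k q := by
      funext q
      rw [Summable.tsum_eq_zero_add (hsum_full q), MLaux.vfull_zero]
    rw [hfun]
    apply MLaux.sliceRegularOn_of
    intro I hI z hz
    exact MLaux.diffSlice_lim Omega_open hTLU_full MLaux.hterm_full I hI z hz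
  · -- poles
    intro m
    obtain ⟨hsum_del, hTLU_del⟩ := MLaux.conv_master (MLaux.vdel_bound m)
    refine ⟨1, one_pos, fun q => ∑' k : ℕ, MLaux.vdel m k q, ?_, ?_⟩
    · apply MLaux.sliceRegularOn_of
      intro I hI z hz
      exact MLaux.diffSlice_lim (sphU_open _ _ _) hTLU_del (MLaux.hterm_del m) I hI z hz
    · intro q _
      have h0 : (q ^ 2 + 1)⁻¹ * (q - qi) + ∑' k : ℕ, MLaux.vfull (k + 1) q =
          ∑' k : ℕ, MLaux.vfull k q := by
        rw [Summable.tsum_eq_zero_add (hsum_full q), MLaux.vfull_zero]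
      have h1 : ∀ k : ℕ, MLaux.vfull k q =
          MLaux.vdel m k q + (if k = m.natAbs then MLaux.F m q else 0) := by
        intro k; rw [MLaux.vdel, sub_add_cancel]
      have hsi : Summable (fun k : ℕ => if k = m.natAbs then MLaux.F m q else 0) :=
        ⟨_, hasSum_ite_eq _ _⟩
      have h2 : ∑' k : ℕ, MLaux.vfull k q = (∑' k : ℕ, MLaux.vdel m k q) + MLaux.F m q := by
        calc ∑' k : ℕ, MLaux.vfull k q
            = ∑' k : ℕ, (MLaux.vdel m k q + (if k = m.natAbs then MLaux.F m q else 0)) :=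
              tsum_congr h1
          _ = (∑' k : ℕ, MLaux.vdel m k q) +
              ∑' k : ℕ, (if k = m.natAbs then MLaux.F m q else 0) :=
              Summable.tsum_add (hsum_del q) hsi
          _ = (∑' k : ℕ, MLaux.vdel m k q) + MLaux.F m q := by rw [tsum_ite_eq]
      have h3 : ((q - (m : ℍ[ℝ])) ^ 2 + 1)⁻¹ * (q - (m : ℍ[ℝ]) - qi) = MLaux.F m q := rfl
      rw [h0, h2, h3, add_comm]
end
end

section
/- Complex Mittag-Leffler Theorem: Let Ω be an open subset of ℂ and let A ⊆ Ω be a set with no accumulation point in Ω. For each a ∈ A let m(a) ≥ 1 be an integer and let c_{1,a}, …, c_{m(a),a} ∈ ℂ, defining the rational function P_a(z) = Σ_{j=1}^{m(a)} c_{j,a} (z−a)^{−j}. Then there exists a function f, holomorphic on Ω ∖ A, such that for every a ∈ A the function z ↦ f(z) − P_a(z) extends holomorphically to a neighborhood of a; i.e. f is meromorphic on Ω with poles exactly at the points of A where P_a ≠ 0 and with principal part P_a at each a ∈ A. -/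
open Filter Topology

noncomputable section

lemma mlPolyApprox {g : ℂ → ℂ} {R r ε : ℝ} (hr : 0 ≤ r) (hrR : r < R)
    (hg : DifferentiableOn ℂ g (Metric.ball 0 R)) (hε : 0 < ε) :
    ∃ q : ℂ → ℂ, Differentiable ℂ q ∧ ∀ z : ℂ, ‖z‖ ≤ r → ‖g z - q z‖ ≤ ε := by
  have hR0 : 0 < R := lt_of_le_of_lt hr hrR
  set R1 : NNReal := ⟨(r + R) / 2, by positivity⟩ with hR1def
  have hR1R : (R1 : ℝ) < R := by
    simp only [hR1def, NNReal.coe_mk]; change (r + R) / 2 < R; linarith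
  have hR1pos : 0 < R1 := by
    rw [← NNReal.coe_pos]; simp only [hR1def, NNReal.coe_mk]; change 0 < (r + R) / 2; positivity
  set r1 : NNReal := ⟨(r + (r + R) / 2) / 2, by positivity⟩ with hr1def
  have hrr1 : r < (r1 : ℝ) := by simp only [hr1def, NNReal.coe_mk]; change r < (r + (r + R) / 2) / 2; linarith
  have hr1R1 : r1 < R1 := by
    rw [← NNReal.coe_lt_coe]; simp only [hr1def, hR1def, NNReal.coe_mk]
    change (r + (r + R) / 2) / 2 < (r + R) / 2; linarith
  have hps : HasFPowerSeriesOnBall g (cauchyPowerSeries g 0 R1) 0 R1 :=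
    (hg.mono (fun x hx => by
      simp only [Metric.mem_closedBall, Metric.mem_ball] at hx ⊢
      exact lt_of_le_of_lt hx hR1R)).hasFPowerSeriesOnBall hR1pos
  set p := cauchyPowerSeries g 0 R1 with hp
  have hconv := hps.tendstoUniformlyOn' (r' := r1) (by exact_mod_cast hr1R1)
  rw [Metric.tendstoUniformlyOn_iff] at hconv
  obtain ⟨n, hn⟩ := (hconv ε hε).exists
  have hdiffk : ∀ k : ℕ, Differentiable ℂ fun z : ℂ => (p k) fun _ => z := by
    intro k
    have hk : (fun z : ℂ => (p k) fun _ => z)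
        = fun z : ℂ => z ^ k * ((p k) fun _ => (1 : ℂ)) := by
      funext z
      have := (p k).map_smul_univ (fun _ : Fin k => z) fun _ => (1 : ℂ)
      simpa [smul_eq_mul] using this
    rw [hk]
    exact (differentiable_pow k).mul (differentiable_const _)
  refine ⟨fun z => p.partialSum n z, ?_, ?_⟩
  · apply Differentiable.fun_sum (u := Finset.range n) (A := fun k z => (p k) fun _ => z)
    exact fun k _ => hdiffk k
  · intro z hz
    have hzmem : z ∈ Metric.ball (0 : ℂ) (0 + r1) := by
      simp only [Metric.mem_ball, zero_add, dist_zero_right]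
      exact lt_of_le_of_lt hz hrr1
    have := hn z (by simpa using hzmem)
    rw [dist_eq_norm] at this
    simpa using this.le

/-- Exhaustion sets for an open set `Ω`. -/
def mlK (Ω : Set ℂ) (n : ℕ) : Set ℂ :=
  {z | ‖z‖ + 1 ≤ n ∧ Metric.ball z (1 / (n + 1)) ⊆ Ω}

lemma mlK_mono {Ω : Set ℂ} {a b : ℕ} (h : a ≤ b) : mlK Ω a ⊆ mlK Ω b := by
  intro z hz
  refine ⟨le_trans hz.1 (by exact_mod_cast h), fun w hw => hz.2 ?_⟩
  rw [Metric.mem_ball] at hw ⊢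
  refine lt_of_lt_of_le hw ?_
  apply one_div_le_one_div_of_le (by positivity)
  have : (a : ℝ) ≤ b := by exact_mod_cast h
  linarith

lemma mlK_subset {Ω : Set ℂ} {n : ℕ} : mlK Ω n ⊆ Ω := by
  intro z hz
  exact hz.2 (Metric.mem_ball_self (by positivity))

lemma mlK_zero {Ω : Set ℂ} : mlK Ω 0 = ∅ := by
  ext z
  simp only [mlK, Set.mem_setOf_eq, Set.mem_empty_iff_false, iff_false, not_and]
  intro h
  exfalso
  push_cast at h
  linarith [norm_nonneg z]

lemma mlK_closed {Ω : Set ℂ} {n : ℕ} : IsClosed (mlK Ω n) := by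
  have h1 : IsClosed {z : ℂ | ‖z‖ + 1 ≤ n} :=
    isClosed_le (continuous_norm.add continuous_const) continuous_const
  have h2 : IsClosed {z : ℂ | Metric.ball z (1 / (n + 1 : ℝ)) ⊆ Ω} := by
    rw [← isOpen_compl_iff, Metric.isOpen_iff]
    intro z hz
    rw [Set.mem_compl_iff, Set.mem_setOf_eq, Set.not_subset] at hz
    obtain ⟨b, hb1, hb2⟩ := hz
    rw [Metric.mem_ball] at hb1
    refine ⟨1 / (n + 1) - dist b z, by linarith, fun w hw => ?_⟩
    rw [Metric.mem_ball] at hw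
    rw [Set.mem_compl_iff, Set.mem_setOf_eq, Set.not_subset]
    refine ⟨b, ?_, hb2⟩
    rw [Metric.mem_ball]
    calc dist b w ≤ dist b z + dist z w := dist_triangle b z w
    _ = dist b z + dist w z := by rw [dist_comm z w]
    _ < 1 / (n + 1) := by linarith
  exact h1.inter h2

lemma mlK_compact {Ω : Set ℂ} {n : ℕ} : IsCompact (mlK Ω n) := by
  refine IsCompact.of_isClosed_subset (isCompact_closedBall (0 : ℂ) n) mlK_closed ?_
  intro z hz
  rw [Metric.mem_closedBall, dist_zero_right]
  linarith [hz.1]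

/-- The principal part. -/
def mlP (M : ℕ) (C : ℕ → ℂ) (a : ℂ) : ℂ → ℂ :=
  fun z => ∑ j ∈ Finset.Icc 1 M, C j * (z - a) ^ (-(j : ℤ))

/-- Approximate the principal part at `a ∉ mlK Ω μ` by a function holomorphic on all of `Ω`. -/
lemma mlApprox {Ω : Set ℂ} {a : ℂ} (haΩ : a ∈ Ω) {μ : ℕ} (ha : a ∉ mlK Ω μ)
    (M : ℕ) (C : ℕ → ℂ) {ε : ℝ} (hε : 0 < ε) :
    ∃ S : ℂ → ℂ, DifferentiableOn ℂ S Ω ∧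
      ∀ z ∈ mlK Ω μ, ‖mlP M C a z - S z‖ ≤ ε := by
  simp only [mlP]
  rcases Nat.eq_zero_or_pos μ with hμ | hμ
  · exact ⟨0, differentiableOn_const 0, by simp [hμ, mlK_zero]⟩
  have ha0 := ha
  simp only [mlK, Set.mem_setOf_eq, not_and_or] at ha
  rcases ha with ha | ha
  · -- case ‖a‖ > μ - 1 : Taylor expansion about 0
    push_neg at ha
    have hr : (0 : ℝ) ≤ (μ : ℝ) - 1 := by
      have : (1 : ℝ) ≤ μ := by exact_mod_cast hμ
      linarith
    have hg : DifferentiableOn ℂ (fun z => ∑ j ∈ Finset.Icc 1 M, C j * (z - a) ^ (-(j : ℤ)))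
        (Metric.ball 0 ‖a‖) := by
      apply DifferentiableOn.fun_sum
      intro j hj
      intro z hz
      have hza : z - a ≠ 0 := by
        rw [Metric.mem_ball, dist_zero_right] at hz
        intro h
        rw [sub_eq_zero] at h
        subst h
        exact lt_irrefl _ hz
      exact (((differentiableAt_id.sub_const a).zpow (Or.inl hza)).const_mul
        (C j)).differentiableWithinAt
    obtain ⟨q, hq, hqe⟩ := mlPolyApprox hr (by linarith) hg hε
    refine ⟨q, hq.differentiableOn, fun z hz => hqe z ?_⟩
    linarith [hz.1]
  · -- case : there is b ∉ Ω close to a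
    rw [Set.not_subset] at ha
    obtain ⟨b, hb1, hb2⟩ := ha
    rw [Metric.mem_ball] at hb1
    have hab : a ≠ b := fun h => hb2 (h ▸ haΩ)
    have hδ : (0 : ℝ) < ‖a - b‖ := by
      rw [norm_pos_iff, sub_ne_zero]; exact hab
    set δ := ‖a - b‖ with hδdef
    have hδμ : δ < 1 / (μ + 1) := by
      rw [hδdef, ← dist_eq_norm, dist_comm]
      exact hb1
    have hrR : (μ : ℝ) + 1 < 1 / δ := by
      rw [lt_div_iff₀ hδ]
      calc ((μ : ℝ) + 1) * δ < ((μ : ℝ) + 1) * (1 / (μ + 1)) := by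
            apply mul_lt_mul_of_pos_left hδμ (by positivity)
      _ = 1 := by field_simp
    -- the transplanted function F
    set F : ℂ → ℂ := fun w => ∑ j ∈ Finset.Icc 1 M, C j * (w * (1 - (a - b) * w)⁻¹) ^ j with hF
    have hFdiff : DifferentiableOn ℂ F (Metric.ball 0 (1 / δ)) := by
      apply DifferentiableOn.fun_sum
      intro j hj w hw
      have hne : 1 - (a - b) * w ≠ 0 := by
        intro h
        have h1 : (a - b) * w = 1 := by linear_combination -h
        have : ‖(a - b) * w‖ < 1 := by
          rw [Metric.mem_ball, dist_zero_right] at hw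
          rw [norm_mul]
          calc δ * ‖w‖ < δ * (1 / δ) := by exact mul_lt_mul_of_pos_left hw hδ
          _ = 1 := by field_simp
        rw [h1, norm_one] at this
        exact lt_irrefl _ this
      exact ((((differentiableAt_id.mul
        (((differentiableAt_const (1:ℂ)).sub (differentiableAt_id.const_mul _)).inv hne))).pow
        j).const_mul (C j)).differentiableWithinAt
    obtain ⟨q, hq, hqe⟩ := mlPolyApprox (by positivity : (0:ℝ) ≤ (μ : ℝ) + 1) hrR hFdiff hε
    refine ⟨fun z => q ((z - b)⁻¹), fun z hz => ?_, fun z hz => ?_⟩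
    · have hzb : z - b ≠ 0 := sub_ne_zero.mpr (fun h => hb2 (h ▸ hz))
      exact (hq.differentiableAt.comp z
        ((differentiableAt_id.sub_const b).inv hzb)).differentiableWithinAt
    · -- z ∈ mlK Ω μ
      have hzdist : 1 / (μ + 1 : ℝ) ≤ dist b z := by
        by_contra h
        push_neg at h
        exact hb2 (hz.2 (Metric.mem_ball.mpr h))
      have hzb : z - b ≠ 0 := by
        rw [sub_ne_zero]
        intro h
        subst h
        rw [dist_self] at hzdist
        have : (0:ℝ) < 1 / (μ + 1 : ℝ) := by positivity
        linarith
      have hza : z - a ≠ 0 := by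
        rw [sub_ne_zero]
        intro h
        exact ha0 (h ▸ hz)
      have hwnorm : ‖(z - b)⁻¹‖ ≤ (μ : ℝ) + 1 := by
        have h1 : 1 / ((μ : ℝ) + 1) ≤ ‖z - b‖ := by
          rwa [dist_eq_norm, norm_sub_rev] at hzdist
        rw [norm_inv]
        calc ‖z - b‖⁻¹ ≤ (1 / ((μ : ℝ) + 1))⁻¹ := by
              apply inv_anti₀ (by positivity) h1
        _ = (μ : ℝ) + 1 := by rw [one_div, inv_inv]
      have hkey : ∀ j ∈ Finset.Icc 1 M,
          C j * (z - a) ^ (-(j : ℤ))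
            = C j * ((z - b)⁻¹ * (1 - (a - b) * (z - b)⁻¹)⁻¹) ^ j := by
        intro j hj
        congr 1
        have h2 : (z - b)⁻¹ * (1 - (a - b) * (z - b)⁻¹)⁻¹ = (z - a)⁻¹ := by
          have h3 : 1 - (a - b) * (z - b)⁻¹ = (z - a) * (z - b)⁻¹ := by
            field_simp
            ring
          rw [h3, mul_inv, inv_inv]
          field_simp
        rw [h2, zpow_neg, zpow_natCast, ← inv_pow]
      have hsum : (∑ j ∈ Finset.Icc 1 M, C j * (z - a) ^ (-(j : ℤ))) = F ((z - b)⁻¹) := by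
        rw [hF]
        exact Finset.sum_congr rfl hkey
      rw [hsum]
      exact hqe _ hwnorm

/-- the classical complex Mittag-Leffler theorem: given a set `A ⊆ Ω`
with no accumulation point in `Ω` and, for each `a ∈ A`, a principal part
`P_a(z) = Σ_{j=1}^{m(a)} c_{j,a} (z-a)^{-j}`, there is a function `f`, holomorphic on
`Ω ∖ A`, such that `f - P_a` extends holomorphically near each `a ∈ A`. -/
theorem complex_mittag_leffler (Ω : Set ℂ) (hΩ : IsOpen Ω) (A : Set ℂ) (hA : A ⊆ Ω)
    (hacc : ∀ z ∈ Ω, ∃ V ∈ nhds z, (V ∩ A).Finite)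
    (m : ℂ → ℕ) (hm : ∀ a ∈ A, 1 ≤ m a) (c : ℂ → ℕ → ℂ) :
    ∃ f : ℂ → ℂ, DifferentiableOn ℂ f (Ω \ A) ∧
      ∀ a ∈ A, ∃ V : Set ℂ, IsOpen V ∧ a ∈ V ∧ V ⊆ (Ω \ A) ∪ {a} ∧
        ∃ g : ℂ → ℂ, DifferentiableOn ℂ g V ∧
          ∀ z ∈ V, z ≠ a →
            f z - (∑ j ∈ Finset.Icc 1 (m a), c a j * (z - a) ^ (-(j : ℤ))) = g z := by
  classical
  -- `Ω \ A` is open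
  have hopen : IsOpen (Ω \ A) := by
    rw [isOpen_iff_mem_nhds]
    rintro z ⟨hzΩ, hzA⟩
    obtain ⟨V, hV, hVfin⟩ := hacc z hzΩ
    have h1 : IsOpen (interior V ∩ Ω ∩ (V ∩ A)ᶜ) :=
      (isOpen_interior.inter hΩ).inter hVfin.isClosed.isOpen_compl
    have h2 : z ∈ interior V ∩ Ω ∩ (V ∩ A)ᶜ :=
      ⟨⟨mem_interior_iff_mem_nhds.mpr hV, hzΩ⟩, fun h => hzA h.2⟩
    refine Filter.mem_of_superset (h1.mem_nhds h2) ?_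
    rintro w ⟨⟨hw1, hw2⟩, hw3⟩
    exact ⟨hw2, fun hwA => hw3 ⟨interior_subset hw1, hwA⟩⟩
  -- each point of `Ω` lies in some `mlK`
  have hmem : ∀ z ∈ Ω, ∃ n : ℕ, z ∈ mlK Ω n := by
    intro z hz
    obtain ⟨ρ, hρ, hball⟩ := Metric.isOpen_iff.mp hΩ z hz
    obtain ⟨n, hn⟩ := exists_nat_ge (max (‖z‖ + 1) (1 / ρ))
    refine ⟨n, le_trans (le_max_left _ _) hn, fun w hw => hball ?_⟩
    rw [Metric.mem_ball] at hw ⊢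
    refine lt_of_lt_of_le hw ?_
    have h1 : 1 / ρ ≤ (n : ℝ) + 1 := by
      have := le_trans (le_max_right (‖z‖ + 1) (1 / ρ)) hn
      linarith
    calc 1 / ((n : ℝ) + 1) ≤ 1 / (1 / ρ) := by
          apply one_div_le_one_div_of_le (by positivity) h1
    _ = ρ := one_div_one_div ρ
  -- `A` meets each `mlK` in a finite set
  have hfinK : ∀ n : ℕ, (A ∩ mlK Ω n).Finite := by
    intro n
    have hex : ∀ z ∈ mlK Ω n, ∃ V, V ∈ 𝓝 z ∧ (V ∩ A).Finite := by
      intro z hz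
      obtain ⟨V, h1, h2⟩ := hacc z (mlK_subset hz)
      exact ⟨V, h1, h2⟩
    choose! V hV1 hV2 using hex
    obtain ⟨t, htK, hcov⟩ := mlK_compact.elim_nhds_subcover V hV1
    apply Set.Finite.subset (Set.Finite.biUnion t.finite_toSet
      (fun z hz => (hV2 z (htK z hz)).subset (Set.inter_subset_inter_left A Set.Subset.rfl)))
    intro w hw
    obtain ⟨x, hx⟩ := Set.mem_iUnion.mp (hcov hw.2)
    simp only [Set.mem_iUnion, exists_prop] at hx ⊢
    exact ⟨x, hx.1, hx.2, hw.1⟩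
  -- countability of A
  have hAcount : A.Countable := by
    have hsub : A ⊆ ⋃ n : ℕ, A ∩ mlK Ω n := by
      intro a haA
      obtain ⟨n, hn⟩ := hmem a (hA haA)
      exact Set.mem_iUnion.mpr ⟨n, haA, hn⟩
    exact Set.Countable.mono hsub (Set.countable_iUnion fun n => (hfinK n).countable)
  haveI hc : Countable ↥A := hAcount.to_subtype
  obtain ⟨nf, hnf⟩ := exists_injective_nat ↥A
  set u : ↥A → ℝ := fun a => (1 / 2 : ℝ) ^ nf a with hu_def
  have hu : Summable u := summable_geometric_two.comp_injective hnf
  have hupos : ∀ a, 0 < u a := fun a => by positivity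
  have hmemA : ∀ a : ↥A, ∃ n : ℕ, (a : ℂ) ∈ mlK Ω n := fun a => hmem a (hA a.2)
  set μ : ↥A → ℕ := fun a => Nat.find (hmemA a) - 1 with hμ_def
  have hμspec : ∀ a : ↥A, (a : ℂ) ∈ mlK Ω (μ a + 1) ∧ (a : ℂ) ∉ mlK Ω (μ a) := by
    intro a
    have h0 : Nat.find (hmemA a) ≠ 0 := by
      intro h
      have := Nat.find_spec (hmemA a)
      rw [h, mlK_zero] at this
      exact this
    have h1 : μ a + 1 = Nat.find (hmemA a) := by
      simp only [hμ_def]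
      omega
    constructor
    · rw [h1]; exact Nat.find_spec (hmemA a)
    · apply Nat.find_min (hmemA a)
      omega
  have hfinμ : ∀ N : ℕ, {a : ↥A | μ a < N}.Finite := by
    intro N
    have hsub : {a : ↥A | μ a < N} ⊆ Subtype.val ⁻¹' (A ∩ mlK Ω N) := by
      intro a haN
      refine ⟨a.2, mlK_mono ?_ (hμspec a).1⟩
      simp only [Set.mem_setOf_eq] at haN
      omega
    exact Set.Finite.subset (Set.Finite.preimage Subtype.val_injective.injOn (hfinK N)) hsub
  -- choose the holomorphic corrections
  have hSex : ∀ a : ↥A, ∃ S : ℂ → ℂ, DifferentiableOn ℂ S Ω ∧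
      ∀ z ∈ mlK Ω (μ a), ‖mlP (m a) (c a) a z - S z‖ ≤ u a :=
    fun a => mlApprox (hA a.2) (hμspec a).2 (m a) (c a) (hupos a)
  choose S hSdiff hSapprox using hSex
  have hPdiff : ∀ (a : ℂ) (s : Set ℂ), a ∉ s → DifferentiableOn ℂ (mlP (m a) (c a) a) s := by
    intro a s hs
    apply DifferentiableOn.fun_sum
    intro j hj z hz
    have hza : z - a ≠ 0 := sub_ne_zero.mpr fun h => hs (h ▸ hz)
    exact (((differentiableAt_id.sub_const a).zpow
      (Or.inl hza)).const_mul _).differentiableWithinAt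
  set g : ↥A → ℂ → ℂ := fun a z => mlP (m a) (c a) a z - S a z with hg_def
  set f : ℂ → ℂ := fun z => ∑' a : ↥A, g a z with hf_def
  -- the key local decomposition
  have key : ∀ z₀ ∈ Ω, ∀ ρ₀ > (0 : ℝ), ∀ T₀ : Finset ↥A,
      ∃ ρ > (0 : ℝ), ρ ≤ ρ₀ ∧ Metric.closedBall z₀ ρ ⊆ Ω ∧ ∃ T : Finset ↥A, T₀ ⊆ T ∧
        DifferentiableOn ℂ (fun z => ∑' a : ↥A, if a ∈ T then 0 else g a z)
          (Metric.ball z₀ ρ) ∧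
        (∀ a : ↥A, a ∉ T → (a : ℂ) ∉ Metric.closedBall z₀ ρ) ∧
        (∀ z ∈ Metric.closedBall z₀ ρ,
          f z = (∑ a ∈ T, g a z) + ∑' a : ↥A, if a ∈ T then 0 else g a z) := by
    intro z₀ hz₀ ρ₀ hρ₀ T₀
    obtain ⟨ρ₁, hρ₁, hball₁⟩ := Metric.isOpen_iff.mp hΩ z₀ hz₀
    set ρ := min ρ₀ (ρ₁ / 2) with hρ_def
    have hρpos : 0 < ρ := lt_min hρ₀ (by linarith)
    have hρle : ρ ≤ ρ₀ := min_le_left _ _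
    have hρ2 : ρ ≤ ρ₁ / 2 := min_le_right _ _
    obtain ⟨N, hN⟩ := exists_nat_ge (max (‖z₀‖ + ρ + 1) (2 / ρ₁))
    have hsubK : Metric.closedBall z₀ ρ ⊆ mlK Ω N := by
      intro z hz
      rw [Metric.mem_closedBall] at hz
      constructor
      · have hz2 : ‖z‖ ≤ ‖z₀‖ + ρ := by
          calc ‖z‖ = ‖z₀ + (z - z₀)‖ := by ring_nf
          _ ≤ ‖z₀‖ + ‖z - z₀‖ := norm_add_le _ _
          _ ≤ ‖z₀‖ + ρ := by
              rw [← dist_eq_norm]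
              linarith
        have h2 := le_trans (le_max_left (‖z₀‖ + ρ + 1) (2 / ρ₁)) hN
        linarith
      · intro w hw
        apply hball₁
        rw [Metric.mem_ball] at hw ⊢
        have h3 : 2 / ρ₁ ≤ (N : ℝ) := le_trans (le_max_right _ _) hN
        have h5 : 2 ≤ ρ₁ * N := by
          have := (div_le_iff₀ hρ₁).mp h3
          linarith
        have h4 : 1 / ((N : ℝ) + 1) ≤ ρ₁ / 2 := by
          rw [div_le_div_iff₀ (by positivity) (by norm_num : (0 : ℝ) < 2)]
          nlinarith
        calc dist w z₀ ≤ dist w z + dist z z₀ := dist_triangle _ _ _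
        _ < 1 / ((N : ℝ) + 1) + ρ := by linarith
        _ ≤ ρ₁ / 2 + ρ₁ / 2 := by linarith
        _ = ρ₁ := by ring
    have hsubΩ : Metric.closedBall z₀ ρ ⊆ Ω := fun z hz => mlK_subset (hsubK hz)
    set T : Finset ↥A := T₀ ∪ (hfinμ N).toFinset with hT_def
    have hμge : ∀ a : ↥A, a ∉ T → N ≤ μ a := by
      intro a haT
      by_contra h
      push_neg at h
      exact haT (Finset.mem_union_right _ ((hfinμ N).mem_toFinset.mpr h))
    have hbound : ∀ (a : ↥A), ∀ z ∈ Metric.closedBall z₀ ρ,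
        ‖if a ∈ T then (0 : ℂ) else g a z‖ ≤ u a := by
      intro a z hz
      by_cases haT : a ∈ T
      · simp [haT, (hupos a).le]
      · rw [if_neg haT]
        exact hSapprox a z (mlK_mono (hμge a haT) (hsubK hz))
    have hnotin : ∀ a : ↥A, a ∉ T → (a : ℂ) ∉ Metric.closedBall z₀ ρ := by
      intro a haT hmem'
      exact (hμspec a).2 (mlK_mono (hμge a haT) (hsubK hmem'))
    have htail_sum : ∀ z ∈ Metric.closedBall z₀ ρ,
        Summable fun a : ↥A => if a ∈ T then (0 : ℂ) else g a z :=
      fun z hz => Summable.of_norm_bounded hu fun a => hbound a z hz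
    have htu : TendstoUniformlyOn
        (fun (t : Finset ↥A) z => ∑ a ∈ t, if a ∈ T then (0 : ℂ) else g a z)
        (fun z => ∑' a : ↥A, if a ∈ T then (0 : ℂ) else g a z) atTop
        (Metric.closedBall z₀ ρ) :=
      tendstoUniformlyOn_tsum hu fun a z hz => hbound a z hz
    have htaildiff : DifferentiableOn ℂ
        (fun z => ∑' a : ↥A, if a ∈ T then (0 : ℂ) else g a z) (Metric.ball z₀ ρ) := by
      apply (htu.tendstoLocallyUniformlyOn.mono Metric.ball_subset_closedBall).differentiableOn
      · apply Filter.Eventually.of_forall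
        intro t
        apply DifferentiableOn.fun_sum
        intro a hat
        by_cases haT : a ∈ T
        · simp only [if_pos haT]
          exact differentiableOn_const 0
        · simp only [if_neg haT]
          apply DifferentiableOn.sub
          · apply hPdiff
            intro hmem'
            exact hnotin a haT (Metric.ball_subset_closedBall hmem')
          · exact (hSdiff a).mono fun w hw => hsubΩ (Metric.ball_subset_closedBall hw)
      · exact Metric.isOpen_ball
    have hsplit : ∀ z ∈ Metric.closedBall z₀ ρ,
        f z = (∑ a ∈ T, g a z) + ∑' a : ↥A, if a ∈ T then (0 : ℂ) else g a z := by
      intro z hz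
      have h2 := htail_sum z hz
      have h1 : Summable fun a : ↥A => if a ∈ T then g a z else (0 : ℂ) :=
        summable_of_ne_finset_zero (s := T) fun a haT => if_neg haT
      have h3 : (fun a : ↥A => g a z)
          = fun a => (if a ∈ T then g a z else 0) + if a ∈ T then 0 else g a z := by
        funext a
        by_cases haT : a ∈ T <;> simp [haT]
      calc f z = ∑' a : ↥A, ((if a ∈ T then g a z else 0) + if a ∈ T then 0 else g a z) := by
            rw [hf_def, ← h3]
      _ = (∑' a : ↥A, if a ∈ T then g a z else 0)
            + ∑' a : ↥A, if a ∈ T then 0 else g a z := Summable.tsum_add h1 h2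
      _ = (∑ a ∈ T, g a z) + ∑' a : ↥A, if a ∈ T then 0 else g a z := by
            congr 1
            rw [tsum_eq_sum (s := T) fun a haT => if_neg haT]
            exact Finset.sum_congr rfl fun a haT => if_pos haT
    exact ⟨ρ, hρpos, hρle, hsubΩ, T, Finset.subset_union_left, htaildiff, hnotin, hsplit⟩
  -- final assembly
  refine ⟨f, ?_, ?_⟩
  · -- f is holomorphic on Ω \ A
    intro z₀ hz₀
    obtain ⟨ρ₀, hρ₀, hball₀⟩ := Metric.isOpen_iff.mp hopen z₀ hz₀
    obtain ⟨ρ, hρ, hρle, hsubΩ, T, hT₀, htaildiff, hnotin, hsplit⟩ :=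
      key z₀ hz₀.1 (ρ₀ / 2) (by linarith) ∅
    have hballsub : Metric.ball z₀ ρ ⊆ Ω \ A := by
      intro w hw
      apply hball₀
      rw [Metric.mem_ball] at hw ⊢
      linarith
    have hfd : DifferentiableOn ℂ f (Metric.ball z₀ ρ) := by
      have hd : DifferentiableOn ℂ
          (fun z => (∑ a ∈ T, g a z) + ∑' a : ↥A, if a ∈ T then (0 : ℂ) else g a z)
          (Metric.ball z₀ ρ) := by
        apply DifferentiableOn.add
        · apply DifferentiableOn.fun_sum
          intro a hat
          apply DifferentiableOn.sub
          · apply hPdiff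
            intro hmem'
            exact (hballsub hmem').2 a.2
          · exact (hSdiff a).mono fun w hw => (hballsub hw).1
        · exact htaildiff
      exact hd.congr fun z hz => hsplit z (Metric.ball_subset_closedBall hz)
    exact (hfd.differentiableAt
      (Metric.isOpen_ball.mem_nhds (Metric.mem_ball_self hρ))).differentiableWithinAt
  · -- the principal part at each a₀ ∈ A
    intro a₀ ha₀
    obtain ⟨V₀, hV₀, hV₀fin⟩ := hacc a₀ (hA ha₀)
    have hop : IsOpen (interior V₀ ∩ Ω ∩ ((V₀ ∩ A) \ {a₀})ᶜ) :=
      (isOpen_interior.inter hΩ).inter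
        ((hV₀fin.subset Set.diff_subset).isClosed.isOpen_compl)
    have hmem0 : a₀ ∈ interior V₀ ∩ Ω ∩ ((V₀ ∩ A) \ {a₀})ᶜ :=
      ⟨⟨mem_interior_iff_mem_nhds.mpr hV₀, hA ha₀⟩, fun h => h.2 rfl⟩
    obtain ⟨ρ₀, hρ₀, hball₀⟩ := Metric.isOpen_iff.mp hop a₀ hmem0
    have hisol : ∀ x ∈ Metric.ball a₀ ρ₀, x ∈ A → x = a₀ := by
      intro x hx hxA
      have hxm := hball₀ hx
      by_contra hne
      exact hxm.2 ⟨⟨interior_subset hxm.1.1, hxA⟩, hne⟩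
    set a' : ↥A := ⟨a₀, ha₀⟩ with ha'_def
    obtain ⟨ρ, hρ, hρle, hsubΩ, T, hT₀, htaildiff, hnotin, hsplit⟩ :=
      key a₀ (hA ha₀) (ρ₀ / 2) (by linarith) {a'}
    have ha'T : a' ∈ T := hT₀ (Finset.mem_singleton_self a')
    have hballsub : Metric.ball a₀ ρ ⊆ Metric.ball a₀ ρ₀ := by
      apply Metric.ball_subset_ball
      linarith
    refine ⟨Metric.ball a₀ ρ, Metric.isOpen_ball, Metric.mem_ball_self hρ, ?_, ?_⟩
    · intro x hx
      have hxΩ : x ∈ Ω := hsubΩ (Metric.ball_subset_closedBall hx)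
      by_cases hxA : x ∈ A
      · right
        exact hisol x (hballsub hx) hxA
      · left
        exact ⟨hxΩ, hxA⟩
    · refine ⟨fun z => (∑ a ∈ T.erase a', g a z)
        + (∑' a : ↥A, if a ∈ T then (0 : ℂ) else g a z) - S a' z, ?_, ?_⟩
      · apply DifferentiableOn.sub
        · apply DifferentiableOn.add
          · apply DifferentiableOn.fun_sum
            intro a hat
            apply DifferentiableOn.sub
            · apply hPdiff
              intro hmem'
              have hxa : (a : ℂ) = a₀ := hisol _ (hballsub hmem') a.2
              exact Finset.ne_of_mem_erase hat (Subtype.ext hxa)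
            · exact (hSdiff a).mono fun w hw =>
                hsubΩ (Metric.ball_subset_closedBall hw)
          · exact htaildiff
        · exact (hSdiff a').mono fun w hw => hsubΩ (Metric.ball_subset_closedBall hw)
      · intro z hz hzne
        have hz' : z ∈ Metric.closedBall a₀ ρ := Metric.ball_subset_closedBall hz
        have hfz := hsplit z hz'
        have hTsum : (∑ a ∈ T, g a z) = (∑ a ∈ T.erase a', g a z) + g a' z :=
          (Finset.sum_erase_add T _ ha'T).symm
        have hga' : g a' z = mlP (m a₀) (c a₀) a₀ z - S a' z := rfl
        have hgoal : f z - mlP (m a₀) (c a₀) a₀ z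
            = (∑ a ∈ T.erase a', g a z)
              + (∑' a : ↥A, if a ∈ T then (0 : ℂ) else g a z) - S a' z := by
          rw [hfz, hTsum, hga']
          ring
        simpa only [mlP] using hgoal
end
end
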